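/- arXiv:2305.00703 — 7 statements merged into one kernel-verified Lean document; each statement's English description precedes it below -/
import Mathlib

section
/- Let μ be a positive Borel measure on ℝ and let f be a nonnegative μ-measurable function on ℝ such that μ({x : f(x) > t}) < ∞ for every t > 0. Then for every x ∈ ℝ, the symmetric decreasing rearrangement (with respect to μ) of the uncentered maximal function M_μ f satisfies (M_μ f)*(x) ≤ M(f*)(x), where M denotes the uncentered Hardy–Littlewood maximal operator with respect to Lebesgue measure and f* is the symmetric decreasing rearrangement of f with respect to μ. -/
open MeasureTheory Set ENNReal

/-- Symmetric decreasing rearrangement (w.r.t. the measure `μ`) of an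
`ℝ≥0∞`-valued function `g` on `ℝ`:  `g*(x) = inf {t > 0 | μ {g > t} ≤ 2|x|}`. -/
noncomputable def rearrE (μ : Measure ℝ) (g : ℝ → ℝ≥0∞) (x : ℝ) : ℝ≥0∞ :=
  sInf {t : ℝ≥0∞ | 0 < t ∧ μ {y | t < g y} ≤ ENNReal.ofReal (2 * |x|)}

/-- Symmetric decreasing rearrangement (w.r.t. `μ`) of a real-valued function:
`f*(x) = inf {t > 0 | μ {|f| > t} ≤ 2|x|}`. -/
noncomputable def rearr (μ : Measure ℝ) (f : ℝ → ℝ) (x : ℝ) : ℝ≥0∞ :=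
  rearrE μ (fun y => ENNReal.ofReal |f y|) x

/-- Uncentered Hardy-Littlewood maximal function w.r.t. `μ` of an
`ℝ≥0∞`-valued function: the sup of averages over open intervals containing `x`
of positive `μ`-measure. -/
noncomputable def maximalE (μ : Measure ℝ) (g : ℝ → ℝ≥0∞) (x : ℝ) : ℝ≥0∞ :=
  ⨆ (a : ℝ) (b : ℝ) (_ : x ∈ Ioo a b) (_ : 0 < μ (Ioo a b)),
    (μ (Ioo a b))⁻¹ * ∫⁻ y in Ioo a b, g y ∂μ

/-- Uncentered Hardy-Littlewood maximal function `M_μ f` of a real-valued `f`. -/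
noncomputable def maximal (μ : Measure ℝ) (f : ℝ → ℝ) (x : ℝ) : ℝ≥0∞ :=
  maximalE μ (fun y => ENNReal.ofReal |f y|) x

/-- Weak `L^p` quasinorm w.r.t. `μ` of an `ℝ≥0∞`-valued function:
`sup_{t>0} t · μ({g > t})^(1/p)`. -/
noncomputable def wnormE (μ : Measure ℝ) (g : ℝ → ℝ≥0∞) (p : ℝ) : ℝ≥0∞ :=
  ⨆ (t : ℝ) (_ : 0 < t), ENNReal.ofReal t * μ {x | ENNReal.ofReal t < g x} ^ (1 / p)

/-- Weak `L^p` quasinorm `‖f‖_{L^{p,∞}(ℝ,dμ)} = sup_{t>0} t · μ({|f| > t})^(1/p)`. -/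
noncomputable def wnorm' (μ : Measure ℝ) (f : ℝ → ℝ) (p : ℝ) : ℝ≥0∞ :=
  wnormE μ (fun x => ENNReal.ofReal |f x|) p

/-- `f` is distributionally symmetric: for every `t > 0` the sets
`{x > 0 | f x > t}` and `{x < 0 | f x > t}` have the same Lebesgue measure. -/
def DistribSymm (f : ℝ → ℝ) : Prop :=
  ∀ t : ℝ, 0 < t → volume {x | 0 < x ∧ t < f x} = volume {x | x < 0 ∧ t < f x}

/-!
Fix `t` with `μ {M_μ f > t} > 2|x|`; it suffices to show `t ≤ M(f*)(x)`. By Lindelöf and continuity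
from below, finitely many intervals on each of which the `μ`-average of `f` is at least `t` cover
more than `2|x|` of `{M_μ f > t}`. The one-dimensional covering lemma splits them into two
disjoint subfamilies with unions `U₁, U₂`, and inclusion-exclusion gives
`t (μ V + μ W) ≤ ∫_V f dμ + ∫_W f dμ` for `V = U₁ ∩ U₂`, `W = U₁ ∪ U₂`, where `μ W > 2|x|`.
By the layer cake formula `∫_A f dμ ≤ ∫₀^∞ min (μ A) (μ {f > s}) ds`, while the superlevel sets of
`f*` are centred intervals of length `μ {f > s}`. Hence on an interval `I ∋ x` of length
`(μ V + μ W) / 2 + ε`, having length `μ W / 2` on the side of `x`,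
`2 ∫_I f* ≥ ∫_V f dμ + ∫_W f dμ ≥ t (μ V + μ W)`; letting `ε → 0` gives `t ≤ M(f*)(x)`.
-/

section IntervalFamilies

variable {α : Type*} [LinearOrder α]

def HasCoveredMember (s : Finset (α × α)) : Prop :=
  ∃ p ∈ s, ∃ q ∈ s.erase p, ∃ r ∈ s.erase p, Ioo p.1 p.2 ⊆ Ioo q.1 q.2 ∪ Ioo r.1 r.2

theorem HasCoveredMember.mono {s s' : Finset (α × α)} (h : s ⊆ s') :
    HasCoveredMember s → HasCoveredMember s' := by
  rintro ⟨p, hp, q, hq, r, hr, hpqr⟩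
  exact ⟨p, h hp, q, Finset.erase_subset_erase p h hq, r, Finset.erase_subset_erase p h hr, hpqr⟩

theorem exists_pairwiseDisjoint_split_of_not_hasCoveredMember (s : Finset (α × α))
    (hs : ¬ HasCoveredMember s) :
    ∃ u v : Finset (α × α), u ∪ v = s ∧
      (u : Set (α × α)).PairwiseDisjoint (fun p ↦ Ioo p.1 p.2) ∧
      (v : Set (α × α)).PairwiseDisjoint (fun p ↦ Ioo p.1 p.2) ∧
      ∀ q ∈ v, ∃ m ∈ s, m ≠ q ∧ m.1 ≤ q.1 := by
  revert hs
  refine Finset.induction_on_min_value Prod.fst s (by simp) fun a s has hmin ih hs ↦ ?_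
  obtain ⟨u, v, rfl, hu, hv, hvs⟩ := ih fun h ↦ hs (h.mono (Finset.subset_insert a _))
  -- the leftmost `a` joins `v` and the families swap; the last conjunct keeps `a` off `v`
  refine ⟨insert a v, u, by rw [Finset.insert_union, Finset.union_comm], ?_, hu,
    fun q hq ↦ ⟨a, Finset.mem_insert_self a _, ?_, hmin q (Finset.mem_union_left v hq)⟩⟩
  · rw [Finset.coe_insert]
    refine hv.insert fun q hq haq ↦ Set.disjoint_left.mpr fun z hza hzq ↦ hs ?_
    obtain ⟨m, hm, hmq, hmq₁⟩ := hvs q hq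
    have hma : m ≠ a := fun h ↦ has (h ▸ hm)
    -- else `q ⊆ m`; so `m ⊆ a ∪ q`, as `a` starts no later than `m` and meets `q`
    have hmq₂ : m.2 < q.2 := by
      by_contra! h
      exact hs ⟨q, Finset.mem_insert_of_mem (Finset.mem_union_right u hq), m,
        Finset.mem_erase.mpr ⟨hmq, Finset.mem_insert_of_mem hm⟩, m,
        Finset.mem_erase.mpr ⟨hmq, Finset.mem_insert_of_mem hm⟩,
        fun w hw ↦ Or.inl ⟨hmq₁.trans_lt hw.1, hw.2.trans_le h⟩⟩
    refine ⟨m, Finset.mem_insert_of_mem hm, a, Finset.mem_erase.mpr ⟨hma.symm,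
      Finset.mem_insert_self a _⟩, q, Finset.mem_erase.mpr ⟨hmq.symm,
      Finset.mem_insert_of_mem (Finset.mem_union_right u hq)⟩, fun w hw ↦ ?_⟩
    rcases lt_or_ge w a.2 with h | h
    · exact Or.inl ⟨(hmin m hm).trans_lt hw.1, h⟩
    · exact Or.inr ⟨hzq.1.trans (hza.2.trans_le h), hw.2.trans hmq₂⟩
  · rintro rfl
    exact has (Finset.mem_union_left v hq)

theorem exists_pairwiseDisjoint_subfamilies (s : Finset (α × α)) :
    ∃ u ⊆ s, ∃ v ⊆ s,
      (u : Set (α × α)).PairwiseDisjoint (fun p ↦ Ioo p.1 p.2) ∧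
      (v : Set (α × α)).PairwiseDisjoint (fun p ↦ Ioo p.1 p.2) ∧
      ⋃ p ∈ s, Ioo p.1 p.2 ⊆ (⋃ p ∈ u, Ioo p.1 p.2) ∪ ⋃ p ∈ v, Ioo p.1 p.2 := by
  induction s using Finset.strongInduction with
  | H s ih =>
  by_cases hs : HasCoveredMember s
  · obtain ⟨p, hp, q, hq, r, hr, hpqr⟩ := hs
    obtain ⟨u, hu, v, hv, hdu, hdv, hcov⟩ := ih _ (Finset.erase_ssubset hp)
    refine ⟨u, hu.trans (s.erase_subset p), v, hv.trans (s.erase_subset p), hdu, hdv,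
      subset_trans ?_ hcov⟩
    refine iUnion₂_subset fun p' hp' ↦ ?_
    have hmem : ∀ {w}, w ∈ s.erase p → Ioo w.1 w.2 ⊆ ⋃ w' ∈ s.erase p, Ioo w'.1 w'.2 :=
      fun hw ↦ Finset.subset_set_biUnion_of_mem (f := fun w ↦ Ioo w.1 w.2) hw
    by_cases h : p' = p
    · subst h
      exact hpqr.trans (union_subset (hmem hq) (hmem hr))
    · exact hmem (Finset.mem_erase.mpr ⟨h, hp'⟩)
  · obtain ⟨u, v, rfl, hu, hv, -⟩ := exists_pairwiseDisjoint_split_of_not_hasCoveredMember s hs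
    exact ⟨u, Finset.subset_union_left, v, Finset.subset_union_right, hu, hv,
      (Finset.set_biUnion_union u v _).le⟩

end IntervalFamilies

section Distribution

variable {X : Type*} [MeasurableSpace X]

theorem exists_lt_measure_setOf_lt_of_lt (μ : Measure X) {g : X → ℝ≥0∞} {s c : ℝ≥0∞}
    (hc : c < μ {z | s < g z}) : ∃ s' > s, c < μ {z | s' < g z} := by
  have hs : s ≠ ⊤ := by
    rintro rfl
    simp at hc
  have hunion : {z | s < g z} = ⋃ n : ℕ, {z | s + (n : ℝ≥0∞)⁻¹ < g z} := by
    ext z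
    simp only [mem_ofPred_eq, mem_iUnion]
    refine ⟨fun h ↦ ?_, fun ⟨n, hn⟩ ↦ le_self_add.trans_lt hn⟩
    obtain ⟨n, hn⟩ := ENNReal.exists_inv_nat_lt (tsub_pos_of_lt h).ne'
    exact ⟨n, lt_tsub_iff_left.mp hn⟩
  have hmono : Monotone fun n : ℕ ↦ {z | s + (n : ℝ≥0∞)⁻¹ < g z} := fun n m hnm z hz ↦
    (add_le_add_right (ENNReal.inv_le_inv.mpr (by exact_mod_cast hnm)) s).trans_lt hz
  rw [hunion, hmono.measure_iUnion, lt_iSup_iff] at hc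
  obtain ⟨n, hn⟩ := hc
  exact ⟨s + (n : ℝ≥0∞)⁻¹, ENNReal.lt_add_right hs (by simp), hn⟩

theorem measurable_measure_setOf_ofReal_lt (ν : Measure X) (h : X → ℝ≥0∞) :
    Measurable fun t : ℝ ↦ ν {z | ENNReal.ofReal t < h z} :=
  Antitone.measurable fun _ _ htt' ↦
    measure_mono fun _ (hz : _ < _) ↦ (ENNReal.ofReal_le_ofReal htt').trans_lt hz

theorem lintegral_eq_lintegral_meas_ofReal_lt_of_ne_top (ν : Measure X) {h : X → ℝ≥0∞}
    (hm : AEMeasurable h ν) (htop : ∀ z, h z ≠ ⊤) :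
    ∫⁻ z, h z ∂ν = ∫⁻ t in Ioi 0, ν {z | ENNReal.ofReal t < h z} := by
  calc ∫⁻ z, h z ∂ν = ∫⁻ z, ENNReal.ofReal (h z).toReal ∂ν := by
        simp only [ENNReal.ofReal_toReal (htop _)]
    _ = ∫⁻ t in Ioi 0, ν {z | t < (h z).toReal} :=
        lintegral_eq_lintegral_meas_lt ν (ae_of_all _ fun _ ↦ ENNReal.toReal_nonneg)
          hm.ennreal_toReal
    _ = ∫⁻ t in Ioi 0, ν {z | ENNReal.ofReal t < h z} := by
        refine setLIntegral_congr_fun measurableSet_Ioi fun t ht ↦ ?_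
        simp only [ENNReal.ofReal_lt_iff_lt_toReal (le_of_lt ht) (htop _)]

theorem lintegral_eq_lintegral_meas_ofReal_lt (ν : Measure X) {h : X → ℝ≥0∞}
    (hm : AEMeasurable h ν) :
    ∫⁻ z, h z ∂ν = ∫⁻ t in Ioi 0, ν {z | ENNReal.ofReal t < h z} := by
  have hmono_trunc : Monotone fun (N : ℕ) z ↦ min (h z) N := fun N M hNM z ↦
    min_le_min_left _ (by exact_mod_cast hNM)
  have hsup : ∀ z, ⨆ N : ℕ, min (h z) N = h z := fun z ↦ by
    rw [← inf_iSup_eq, ENNReal.iSup_natCast, inf_top_eq]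
  have hlevel : ∀ t : ℝ, ⨆ N : ℕ, ν {z | ENNReal.ofReal t < min (h z) N} =
      ν {z | ENNReal.ofReal t < h z} := fun t ↦ by
    rw [← Monotone.measure_iUnion fun N M hNM z hz ↦ hz.trans_le (hmono_trunc hNM z)]
    congr 1
    ext z
    simp only [mem_ofPred_eq, mem_iUnion, lt_min_iff]
    refine ⟨fun ⟨_, h, _⟩ ↦ h, fun h ↦ ?_⟩
    obtain ⟨N, hN⟩ := ENNReal.exists_nat_gt (ENNReal.ofReal_ne_top (r := t))
    exact ⟨N, h, hN⟩
  calc ∫⁻ z, h z ∂ν = ∫⁻ z, ⨆ N : ℕ, min (h z) N ∂ν := by simp_rw [hsup]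
    _ = ⨆ N : ℕ, ∫⁻ z, min (h z) N ∂ν :=
        lintegral_iSup' (fun N ↦ hm.min aemeasurable_const)
          (ae_of_all _ fun z N M hNM ↦ hmono_trunc hNM z)
    _ = ⨆ N : ℕ, ∫⁻ t in Ioi 0, ν {z | ENNReal.ofReal t < min (h z) N} :=
        iSup_congr fun N ↦ lintegral_eq_lintegral_meas_ofReal_lt_of_ne_top ν
          (hm.min aemeasurable_const)
          fun z ↦ ne_top_of_le_ne_top (ENNReal.natCast_ne_top N) (min_le_right _ _)
    _ = ∫⁻ t in Ioi 0, ⨆ N : ℕ, ν {z | ENNReal.ofReal t < min (h z) N} :=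
        (lintegral_iSup (f := fun (N : ℕ) t ↦ ν {z | ENNReal.ofReal t < min (h z) N})
          (fun N ↦ measurable_measure_setOf_ofReal_lt ν _)
          fun N M hNM t ↦ measure_mono fun z (hz : ENNReal.ofReal t < min (h z) N) ↦
            hz.trans_le (hmono_trunc hNM z)).symm
    _ = ∫⁻ t in Ioi 0, ν {z | ENNReal.ofReal t < h z} := by simp_rw [hlevel]

theorem setLIntegral_le_lintegral_min_distribution (μ : Measure X) {g : X → ℝ≥0∞}
    (hg : AEMeasurable g μ) {A : Set X} (hA : MeasurableSet A) :
    ∫⁻ z in A, g z ∂μ ≤ ∫⁻ t in Ioi 0, min (μ A) (μ {z | ENNReal.ofReal t < g z}) := by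
  rw [lintegral_eq_lintegral_meas_ofReal_lt _ hg.restrict]
  refine lintegral_mono fun t ↦ ?_
  rw [Measure.restrict_apply' hA]
  exact le_min (measure_mono inter_subset_right) (measure_mono inter_subset_left)

end Distribution

section Rearrangement

variable (μ : Measure ℝ) (g : ℝ → ℝ≥0∞)

theorem setOf_lt_rearrE {s : ℝ≥0∞} (hs : 0 < s) :
    {y | s < rearrE μ g y} = {y | ENNReal.ofReal (2 * |y|) < μ {z | s < g z}} := by
  ext y
  simp only [mem_ofPred_eq, rearrE]
  refine ⟨fun h ↦ ?_, fun h ↦ ?_⟩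
  · by_contra! hle
    exact h.not_ge (sInf_le ⟨hs, hle⟩)
  · obtain ⟨s', hss', hs'⟩ := exists_lt_measure_setOf_lt_of_lt μ h
    refine hss'.trans_le (le_sInf fun a ⟨_, ha⟩ ↦ ?_)
    by_contra! has'
    exact (hs'.trans_le ((measure_mono fun z (hz : s' < g z) ↦ has'.trans hz).trans ha)).false

theorem measurable_rearrE : Measurable (rearrE μ g) := by
  have hanti : Antitone fun c : ℝ≥0∞ ↦ sInf {t : ℝ≥0∞ | 0 < t ∧ μ {y | t < g y} ≤ c} :=
    fun c c' hcc' ↦ sInf_le_sInf fun t ⟨ht, htc⟩ ↦ ⟨ht, htc.trans hcc'⟩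
  exact hanti.measurable.comp (by fun_prop)

end Rearrangement

theorem two_mul_volume_Ioo_neg (a b : ℝ) (ha : 0 ≤ a) (hb : 0 ≤ b) :
    2 * volume (Ioo (-a) b) = ENNReal.ofReal (2 * a) + ENNReal.ofReal (2 * b) := by
  rw [Real.volume_Ioo, ← ENNReal.ofReal_ofNat 2, ← ENNReal.ofReal_mul zero_le_two,
    ← ENNReal.ofReal_add (by positivity) (by positivity)]
  ring_nf

theorem min_add_min_le_two_mul_volume_inter_Ioo {l r : ℝ} (hl : 0 ≤ l) (hr : 0 ≤ r)
    (m : ℝ≥0∞) :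
    min (ENNReal.ofReal (2 * l)) m + min (ENNReal.ofReal (2 * r)) m
      ≤ 2 * volume ({y : ℝ | ENNReal.ofReal (2 * |y|) < m} ∩ Ioo (-l) r) := by
  rcases eq_or_ne m ⊤ with rfl | hm
  · simp only [min_top_right, ENNReal.ofReal_lt_top, ofPred_true, univ_inter]
    rw [two_mul_volume_Ioo_neg l r hl hr]
  · set c := m.toReal / 2
    have hm_eq : m = ENNReal.ofReal (2 * c) := by
      rw [mul_div_cancel₀ _ two_ne_zero, ENNReal.ofReal_toReal hm]
    have hsub : Ioo (-min c l) (min c r) ⊆ {y : ℝ | ENNReal.ofReal (2 * |y|) < m} ∩ Ioo (-l) r := by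
      refine fun y hy ↦ ⟨?_, ⟨?_, ?_⟩⟩
      · rw [mem_ofPred_eq, hm_eq, ENNReal.ofReal_lt_ofReal_iff_of_nonneg (by positivity)]
        have := abs_lt.mpr ⟨(neg_le_neg (min_le_left c l)).trans_lt hy.1,
          hy.2.trans_le (min_le_left c r)⟩
        linarith
      · linarith [hy.1, min_le_right c l]
      · linarith [hy.2, min_le_right c r]
    calc min (ENNReal.ofReal (2 * l)) m + min (ENNReal.ofReal (2 * r)) m
        = ENNReal.ofReal (2 * min c l) + ENNReal.ofReal (2 * min c r) := by
          simp only [hm_eq, ← ENNReal.ofReal_min, ← mul_min_of_nonneg _ _ (zero_le_two (α := ℝ)),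
            min_comm]
      _ = 2 * volume (Ioo (-min c l) (min c r)) := by
          have hc : 0 ≤ c := by positivity
          rw [two_mul_volume_Ioo_neg _ _ (le_min hc hl) (le_min hc hr)]
      _ ≤ _ := by gcongr

theorem lintegral_add_lintegral_le_two_mul_setLIntegral_rearrE (μ : Measure ℝ) {g : ℝ → ℝ≥0∞}
    (hg : AEMeasurable g μ) {A B : Set ℝ} (hA : MeasurableSet A) (hB : MeasurableSet B)
    {l r : ℝ} (hl : 0 ≤ l) (hr : 0 ≤ r) (hAl : μ A ≤ ENNReal.ofReal (2 * l))
    (hBr : μ B ≤ ENNReal.ofReal (2 * r)) :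
    ∫⁻ z in A, g z ∂μ + ∫⁻ z in B, g z ∂μ ≤ 2 * ∫⁻ y in Ioo (-l) r, rearrE μ g y := by
  set distr : ℝ → ℝ≥0∞ := fun t ↦ μ {z | ENNReal.ofReal t < g z}
  calc ∫⁻ z in A, g z ∂μ + ∫⁻ z in B, g z ∂μ
      ≤ (∫⁻ t in Ioi 0, min (μ A) (distr t)) + ∫⁻ t in Ioi 0, min (μ B) (distr t) :=
        add_le_add (setLIntegral_le_lintegral_min_distribution μ hg hA)
          (setLIntegral_le_lintegral_min_distribution μ hg hB)
    _ ≤ (∫⁻ t in Ioi 0, min (ENNReal.ofReal (2 * l)) (distr t))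
          + ∫⁻ t in Ioi 0, min (ENNReal.ofReal (2 * r)) (distr t) := by
        gcongr
    _ = ∫⁻ t in Ioi 0, (min (ENNReal.ofReal (2 * l)) (distr t)
          + min (ENNReal.ofReal (2 * r)) (distr t)) :=
        (lintegral_add_left (measurable_const.min (measurable_measure_setOf_ofReal_lt μ g)) _).symm
    _ ≤ ∫⁻ t in Ioi 0, 2 * volume ({y | ENNReal.ofReal (2 * |y|) < distr t} ∩ Ioo (-l) r) :=
        lintegral_mono fun t ↦ min_add_min_le_two_mul_volume_inter_Ioo hl hr (distr t)
    _ = ∫⁻ t in Ioi 0, 2 * volume.restrict (Ioo (-l) r) {y | ENNReal.ofReal t < rearrE μ g y} := by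
        refine setLIntegral_congr_fun measurableSet_Ioi fun t ht ↦ ?_
        rw [Measure.restrict_apply' measurableSet_Ioo,
          setOf_lt_rearrE μ g (ENNReal.ofReal_pos.mpr ht)]
    _ = 2 * ∫⁻ y in Ioo (-l) r, rearrE μ g y := by
        rw [lintegral_const_mul' 2 _ (by simp),
          lintegral_eq_lintegral_meas_ofReal_lt _ (measurable_rearrE μ g).aemeasurable]

theorem exists_finset_lt_measure_biUnion {X ι : Type*} [TopologicalSpace X]
    [SecondCountableTopology X] [MeasurableSpace X] (μ : Measure X) {U : ι → Set X}
    {I : Set ι} (hU : ∀ i ∈ I, IsOpen (U i)) {E : Set X} (hE : E ⊆ ⋃ i ∈ I, U i) {c : ℝ≥0∞}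
    (hc : c < μ E) : ∃ s : Finset ι, ↑s ⊆ I ∧ c < μ (⋃ i ∈ s, U i) := by
  classical
  obtain ⟨T, hTI, hTc, hTU⟩ := TopologicalSpace.isOpen_biUnion_countable I U hU
  have := hTc.to_subtype
  have hunion : ⋃ i ∈ T, U i = ⋃ S : Finset T, ⋃ i ∈ S.map (Function.Embedding.subtype _), U i := by
    ext x
    simp only [mem_iUnion, exists_prop, Finset.mem_map, Function.Embedding.subtype_apply,
      Subtype.exists, exists_and_right, exists_eq_right, iUnion_exists]
    exact ⟨fun ⟨i, hi, hx⟩ ↦ ⟨{⟨i, hi⟩}, i, ⟨hi, Finset.mem_singleton_self _⟩, hx⟩,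
      fun ⟨_, i, ⟨hi, _⟩, hx⟩ ↦ ⟨i, hi, hx⟩⟩
  have hmono : Monotone fun S : Finset T ↦ ⋃ i ∈ S.map (Function.Embedding.subtype _), U i :=
    fun S S' hSS' ↦ biUnion_subset_biUnion_left (Finset.map_subset_map.mpr hSS')
  rw [← hTU, hunion] at hE
  obtain ⟨S, hS⟩ := lt_iSup_iff.mp ((hc.trans_le (measure_mono hE)).trans_eq
    hmono.directed_le.measure_iUnion)
  refine ⟨S.map (Function.Embedding.subtype _), fun i hi ↦ hTI ?_, hS⟩
  obtain ⟨j, -, rfl⟩ := Finset.mem_map.mp hi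
  exact j.2

theorem exists_Ioo_of_lt_maximalE (μ : Measure ℝ) (g : ℝ → ℝ≥0∞) {t : ℝ≥0∞} {y : ℝ}
    (hy : t < maximalE μ g y) : ∃ p : ℝ × ℝ, y ∈ Ioo p.1 p.2 ∧ μ (Ioo p.1 p.2) < ⊤ ∧
      t * μ (Ioo p.1 p.2) ≤ ∫⁻ z in Ioo p.1 p.2, g z ∂μ := by
  simp only [maximalE, lt_iSup_iff] at hy
  obtain ⟨a, b, hyab, hpos, hlt⟩ := hy
  have hfin : μ (Ioo a b) ≠ ⊤ := by
    rintro htop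
    simp [htop] at hlt
  refine ⟨(a, b), hyab, hfin.lt_top, ?_⟩
  rw [mul_comm, ← div_eq_mul_inv] at hlt
  exact (ENNReal.le_div_iff_mul_le (.inl hpos.ne') (.inl hfin)).mp hlt.le

section Domination

variable {X : Type*} [MeasurableSpace X] {μ ν : Measure X} {t : ℝ≥0∞}

theorem mul_measure_biUnion_finset_le {ι : Type*} {s : Finset ι} {U : ι → Set X}
    (hd : (s : Set ι).PairwiseDisjoint U) (hm : ∀ i ∈ s, MeasurableSet (U i))
    (h : ∀ i ∈ s, t * μ (U i) ≤ ν (U i)) : t * μ (⋃ i ∈ s, U i) ≤ ν (⋃ i ∈ s, U i) := by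
  rw [measure_biUnion_finset hd hm, measure_biUnion_finset hd hm, Finset.mul_sum]
  exact Finset.sum_le_sum h

theorem mul_measure_inter_add_union_le {U₁ U₂ : Set X} (hU₂ : MeasurableSet U₂)
    (h₁ : t * μ U₁ ≤ ν U₁) (h₂ : t * μ U₂ ≤ ν U₂) :
    t * (μ (U₁ ∩ U₂) + μ (U₁ ∪ U₂)) ≤ ν (U₁ ∩ U₂) + ν (U₁ ∪ U₂) := by
  rw [add_comm, measure_union_add_inter U₁ hU₂, add_comm (ν _), measure_union_add_inter U₁ hU₂,
    mul_add]
  exact add_le_add h₁ h₂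

end Domination

theorem exists_pair_of_lt_measure_setOf_lt_maximalE (μ : Measure ℝ) (g : ℝ → ℝ≥0∞)
    {t c : ℝ≥0∞} (hc : c < μ {y | t < maximalE μ g y}) :
    ∃ U₁ U₂ : Set ℝ, MeasurableSet U₁ ∧ MeasurableSet U₂ ∧ μ U₁ < ⊤ ∧ μ U₂ < ⊤ ∧
      c < μ (U₁ ∪ U₂) ∧ t * μ U₁ ≤ μ.withDensity g U₁ ∧ t * μ U₂ ≤ μ.withDensity g U₂ := by
  set G : Set (ℝ × ℝ) := {p | μ (Ioo p.1 p.2) < ⊤ ∧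
    t * μ (Ioo p.1 p.2) ≤ μ.withDensity g (Ioo p.1 p.2)}
  have hcover : {y | t < maximalE μ g y} ⊆ ⋃ p ∈ G, Ioo p.1 p.2 := fun y hy ↦ by
    obtain ⟨p, hyp, hfin, hp⟩ := exists_Ioo_of_lt_maximalE μ g hy
    exact mem_biUnion (x := p) ⟨hfin, by rwa [withDensity_apply _ measurableSet_Ioo]⟩ hyp
  obtain ⟨s, hsG, hs⟩ := exists_finset_lt_measure_biUnion μ (fun p _ ↦ isOpen_Ioo) hcover hc
  obtain ⟨u, hu, v, hv, hdu, hdv, hcov⟩ := exists_pairwiseDisjoint_subfamilies s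
  have hfin : ∀ w ⊆ s, μ (⋃ p ∈ w, Ioo p.1 p.2) < ⊤ := fun w hw ↦
    measure_biUnion_lt_top w.finite_toSet fun p hp ↦ (hsG (hw hp)).1
  have hdom : ∀ w ⊆ s, (w : Set (ℝ × ℝ)).PairwiseDisjoint (fun p ↦ Ioo p.1 p.2) →
      t * μ (⋃ p ∈ w, Ioo p.1 p.2) ≤ μ.withDensity g (⋃ p ∈ w, Ioo p.1 p.2) := fun w hw hd ↦
    mul_measure_biUnion_finset_le hd (fun _ _ ↦ measurableSet_Ioo) fun p hp ↦ (hsG (hw hp)).2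
  exact ⟨_, _, u.measurableSet_biUnion fun _ _ ↦ measurableSet_Ioo,
    v.measurableSet_biUnion fun _ _ ↦ measurableSet_Ioo, hfin u hu, hfin v hv,
    hs.trans_le (measure_mono hcov), hdom u hu hdu, hdom v hv hdv⟩

theorem exists_pos_mul_add_ofReal_lt {t' t Q : ℝ≥0∞} (ht' : t' < t) (hQ0 : Q ≠ 0)
    (hQ : Q ≠ ⊤) : ∃ ε : ℝ, 0 < ε ∧ t' * (Q + ENNReal.ofReal ε) < t * Q := by
  have hcont : Continuous fun ε : ℝ ↦ t' * (Q + ENNReal.ofReal ε) :=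
    (ENNReal.continuous_const_mul ht'.ne_top).comp (continuous_const.add ENNReal.continuous_ofReal)
  have h0 : t' * (Q + ENNReal.ofReal 0) < t * Q := by
    simpa using ENNReal.mul_lt_mul_left hQ0 hQ ht'
  obtain ⟨ε, hε, hε0⟩ := (((hcont.tendsto 0).eventually (gt_mem_nhds h0)).filter_mono
    nhdsWithin_le_nhds |>.and (self_mem_nhdsWithin (s := Ioi (0 : ℝ)))).exists
  exact ⟨ε, hε0, hε⟩

theorem le_maximalE_volume_of_forall_exists_Ioo {h : ℝ → ℝ≥0∞} {x : ℝ} {t Q : ℝ≥0∞}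
    (hQ0 : Q ≠ 0) (hQ : Q ≠ ⊤) (H : ∀ ε : ℝ, 0 < ε → ∃ a b : ℝ, x ∈ Ioo a b ∧
      volume (Ioo a b) ≤ Q + ENNReal.ofReal ε ∧ t * Q ≤ ∫⁻ y in Ioo a b, h y) :
    t ≤ maximalE volume h x := by
  refine le_of_forall_lt_imp_le_of_dense fun t' ht' ↦ ?_
  obtain ⟨ε, hε, hεt⟩ := exists_pos_mul_add_ofReal_lt ht' hQ0 hQ
  obtain ⟨a, b, hx, hvol, hint⟩ := H ε hε
  have hpos : 0 < volume (Ioo a b) := by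
    rw [Real.volume_Ioo, ENNReal.ofReal_pos, sub_pos]
    exact hx.1.trans hx.2
  have hfin : volume (Ioo a b) ≠ ⊤ := measure_Ioo_lt_top.ne
  have hle : t' ≤ (volume (Ioo a b))⁻¹ * ∫⁻ y in Ioo a b, h y := by
    rw [mul_comm, ← div_eq_mul_inv, ENNReal.le_div_iff_mul_le (.inl hpos.ne') (.inl hfin)]
    exact (mul_le_mul_right hvol t').trans (hεt.le.trans hint)
  exact hle.trans (le_iSup₂_of_le a b (le_iSup₂_of_le (α := ℝ≥0∞) hx hpos le_rfl))

theorem le_maximalE_volume_rearrE (μ : Measure ℝ) {g : ℝ → ℝ≥0∞} (hg : AEMeasurable g μ)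
    {A B : Set ℝ} (hA : MeasurableSet A) (hB : MeasurableSet B) (hAfin : μ A < ⊤)
    (hBfin : μ B < ⊤) {x : ℝ} (hx : ENNReal.ofReal (2 * |x|) < μ B) {t : ℝ≥0∞}
    (ht : t * (μ A + μ B) ≤ ∫⁻ z in A, g z ∂μ + ∫⁻ z in B, g z ∂μ) :
    t ≤ maximalE volume (rearrE μ g) x := by
  obtain ⟨C, hC, hA'⟩ : ∃ C : ℝ, 0 ≤ C ∧ μ A = ENNReal.ofReal C :=
    ⟨_, ENNReal.toReal_nonneg, (ENNReal.ofReal_toReal hAfin.ne).symm⟩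
  obtain ⟨D, hD', hB'⟩ : ∃ D : ℝ, 0 ≤ D ∧ μ B = ENNReal.ofReal D :=
    ⟨_, ENNReal.toReal_nonneg, (ENNReal.ofReal_toReal hBfin.ne).symm⟩
  have hD : 2 * |x| < D := (ENNReal.ofReal_lt_ofReal_iff'.mp (hB' ▸ hx)).1
  have hCD : 0 < (C + D) / 2 := by linarith [abs_nonneg x]
  refine le_maximalE_volume_of_forall_exists_Ioo (ENNReal.ofReal_pos.mpr hCD).ne'
    ENNReal.ofReal_ne_top fun ε hε ↦ ?_
  obtain ⟨l, r, hl, hr, hxlr, hlr, hint⟩ : ∃ l r : ℝ, 0 ≤ l ∧ 0 ≤ r ∧ x ∈ Ioo (-l) r ∧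
      l + r = (C + D) / 2 + ε ∧
      ∫⁻ z in A, g z ∂μ + ∫⁻ z in B, g z ∂μ ≤ 2 * ∫⁻ y in Ioo (-l) r, rearrE μ g y := by
    have hAε : μ A ≤ ENNReal.ofReal (2 * (C / 2 + ε)) :=
      hA' ▸ ENNReal.ofReal_le_ofReal (by linarith)
    have hBD : μ B ≤ ENNReal.ofReal (2 * (D / 2)) := by rw [hB', mul_div_cancel₀ D two_ne_zero]
    rcases le_or_gt 0 x with hx0 | hx0
    · rw [abs_of_nonneg hx0] at hD
      exact ⟨C / 2 + ε, D / 2, by positivity, by positivity, ⟨by linarith, by linarith⟩, by ring,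
        lintegral_add_lintegral_le_two_mul_setLIntegral_rearrE μ hg hA hB (by positivity)
          (by positivity) hAε hBD⟩
    · rw [abs_of_neg hx0] at hD
      refine ⟨D / 2, C / 2 + ε, by positivity, by positivity, ⟨by linarith, by linarith⟩,
        by ring, ?_⟩
      rw [add_comm]
      exact lintegral_add_lintegral_le_two_mul_setLIntegral_rearrE μ hg hB hA (by positivity)
        (by positivity) hBD hAε
  refine ⟨-l, r, hxlr, ?_, ?_⟩
  · rw [Real.volume_Ioo, sub_neg_eq_add, add_comm, hlr, ENNReal.ofReal_add hCD.le hε.le]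
  · have h2Q : 2 * ENNReal.ofReal ((C + D) / 2) = μ A + μ B := by
      rw [hA', hB', ← ENNReal.ofReal_add hC hD', ← ENNReal.ofReal_ofNat 2,
        ← ENNReal.ofReal_mul zero_le_two]
      ring_nf
    refine (ENNReal.mul_le_mul_iff_right two_ne_zero ENNReal.ofNat_ne_top).mp ?_
    calc 2 * (t * ENNReal.ofReal ((C + D) / 2)) = t * (μ A + μ B) := by
          rw [mul_left_comm, h2Q]
      _ ≤ _ := ht.trans hint

theorem rearrE_le_of_forall_lt_measure_imp_le (μ : Measure ℝ) (G : ℝ → ℝ≥0∞) (x : ℝ)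
    {S : ℝ≥0∞} (h : ∀ t, ENNReal.ofReal (2 * |x|) < μ {y | t < G y} → t ≤ S) :
    rearrE μ G x ≤ S :=
  le_of_forall_gt_imp_ge_of_dense fun t ht ↦
    sInf_le ⟨zero_le.trans_lt ht, not_lt.mp fun h' ↦ (h t h').not_gt ht⟩

theorem stmt_0_general (μ : Measure ℝ) (f : ℝ → ℝ) (hf : Measurable f) :
    ∀ x : ℝ, rearrE μ (maximal μ f) x ≤ maximalE volume (rearr μ f) x := by
  intro x
  have hg : AEMeasurable (fun y ↦ ENNReal.ofReal |f y|) μ := by fun_prop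
  refine rearrE_le_of_forall_lt_measure_imp_le μ _ x fun t ht ↦ ?_
  obtain ⟨U₁, U₂, h₁, h₂, hfin₁, hfin₂, hU, hdom₁, hdom₂⟩ :=
    exists_pair_of_lt_measure_setOf_lt_maximalE μ _ ht
  refine le_maximalE_volume_rearrE μ hg (h₁.inter h₂) (h₁.union h₂)
    ((measure_mono inter_subset_left).trans_lt hfin₁) (measure_union_lt_top hfin₁ hfin₂) hU ?_
  simpa only [withDensity_apply _ (h₁.inter h₂), withDensity_apply _ (h₁.union h₂)] using
    mul_measure_inter_add_union_le h₂ hdom₁ hdom₂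

/-- `(M_μ f)* (x) ≤ M(f*) (x)` for all `x`. -/
theorem stmt_0 (μ : Measure ℝ) (f : ℝ → ℝ) (hf : Measurable f)
    (hf0 : ∀ x, 0 ≤ f x)
    (hfin : ∀ t : ℝ, 0 < t → μ {x | t < f x} < ⊤) :
    ∀ x : ℝ, rearrE μ (maximal μ f) x ≤ maximalE volume (rearr μ f) x :=
  stmt_0_general μ f hf
end

section
/- Let 1 < p < ∞ and let C_p be the unique positive root of the equation (p−1)x^p − p x^{p−1} − 1 = 0. Let μ be a positive Borel measure on ℝ. Then for every μ-measurable function f on ℝ, ‖M_μ f‖_{L^{p,∞}(ℝ,dμ)} ≤ C_p ‖f‖_{L^{p,∞}(ℝ,dμ)}. -/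
open MeasureTheory Set ENNReal

/-!
For `s > 0` the level set `{M_μ f > s}` is covered by open intervals `I` with
`s μ(I) ≤ ∫_I |f| dμ`; by Lindelöf and continuity from below it suffices to bound the union `U`
of finitely many of them. Of three intervals through one point, one lies in the union of the
other two, so after discarding intervals no point lies in three of them. With `O` the set of
points covered twice, summing over the intervals gives `s (μ U + μ O) ≤ ∫_U |f| + ∫_O |f|`,
and Kolmogorov's inequality `∫_E |f| ≤ p/(p-1) ‖f‖_{p,∞} μ(E)^(1-1/p)` bounds the right side.
The resulting inequality `s (m + q) ≤ p/(p-1) A (m^(1-1/p) + q^(1-1/p))` between `m = μ U`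
and `q = μ O` forces `s m^(1/p) ≤ C_p A`: weighted AM-GM gives the tangent bound
`p θ^(1-1/p) ≤ (p-1) C θ + C^(1-p)`, and `p + C^(1-p) = (p-1) C` is exactly the equation
defining `C_p`.
-/

lemma add_rpow_one_sub_eq_of_root {p C : ℝ} (hC : 0 < C)
    (hroot : (p - 1) * C ^ p - p * C ^ (p - 1) - 1 = 0) :
    p + C ^ (1 - p) = (p - 1) * C := by
  have hinv : C ^ (1 - p) * C ^ (p - 1) = 1 := by
    rw [← Real.rpow_add hC]; simp
  have hsucc : C * C ^ (p - 1) = C ^ p := by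
    rw [mul_comm, ← Real.rpow_add_one hC.ne']; simp
  refine mul_right_cancel₀ (Real.rpow_pos_of_pos hC (p - 1)).ne' ?_
  linear_combination hinv - (p - 1) * hsucc - hroot

lemma mul_rpow_le_of_root {p C : ℝ} (hp : 1 < p) (hC : 0 < C) {θ : ℝ} (hθ : 0 ≤ θ) :
    p * θ ^ ((p - 1) / p) ≤ (p - 1) * C * θ + C ^ (1 - p) := by
  have hp0 : 0 < p := by linarith
  -- weighted AM-GM with weights `(p - 1) / p`, `1 / p` at the points `C θ`, `C ^ (1 - p)`
  have amgm := Real.geom_mean_le_arith_mean2_weighted (w₁ := (p - 1) / p) (w₂ := 1 / p)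
    (p₁ := C * θ) (p₂ := C ^ (1 - p)) (by bound) (by positivity) (by positivity) (by positivity)
    (by field_simp; ring)
  have hgeom : (C * θ) ^ ((p - 1) / p) * (C ^ (1 - p)) ^ (1 / p) = θ ^ ((p - 1) / p) := by
    rw [Real.mul_rpow hC.le hθ, ← Real.rpow_mul hC.le, mul_right_comm, ← Real.rpow_add hC]
    have : (p - 1) / p + (1 - p) * (1 / p) = 0 := by field_simp; ring
    rw [this, Real.rpow_zero, one_mul]
  rw [hgeom] at amgm
  calc p * θ ^ ((p - 1) / p) ≤ p * ((p - 1) / p * (C * θ) + 1 / p * C ^ (1 - p)) := by gcongr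
    _ = (p - 1) * C * θ + C ^ (1 - p) := by field_simp

lemma mul_one_add_rpow_le_of_root {p C : ℝ} (hp : 1 < p) (hC : 0 < C)
    (hroot : (p - 1) * C ^ p - p * C ^ (p - 1) - 1 = 0) {θ : ℝ} (hθ : 0 ≤ θ) :
    p * (1 + θ ^ ((p - 1) / p)) ≤ (p - 1) * C * (1 + θ) := by
  linarith [mul_rpow_le_of_root hp hC hθ, add_rpow_one_sub_eq_of_root hC hroot]

lemma mul_rpow_one_div_le_of_mul_add_le {p C : ℝ} (hp : 1 < p) (hC : 0 < C)
    (hroot : (p - 1) * C ^ p - p * C ^ (p - 1) - 1 = 0)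
    {s a m q : ℝ} (ha : 0 ≤ a) (hm : 0 ≤ m) (hq : 0 ≤ q)
    (h : s * (m + q) ≤ p / (p - 1) * a * (m ^ ((p - 1) / p) + q ^ ((p - 1) / p))) :
    s * m ^ (1 / p) ≤ C * a := by
  have hp0 : 0 < p := by linarith
  have hp1 : p - 1 ≠ 0 := by linarith
  rcases hm.eq_or_lt with rfl | hm
  · rw [Real.zero_rpow (by positivity), mul_zero]; positivity
  set α := (p - 1) / p with hα
  set θ := q / m with hθ_def
  have hθ : 0 ≤ θ := by positivity
  have hsplit : m ^ α * m ^ (1 / p) = m := by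
    rw [← Real.rpow_add hm]; convert Real.rpow_one m using 2; rw [hα]; field_simp; ring
  have hq_eq : q = m * θ := by rw [hθ_def]; field_simp
  have hqα : q ^ α = m ^ α * θ ^ α := by rw [hq_eq, Real.mul_rpow hm.le hθ]
  have key : s * m ^ (1 / p) * (m ^ α * (1 + θ)) ≤ C * a * (m ^ α * (1 + θ)) := by
    calc s * m ^ (1 / p) * (m ^ α * (1 + θ)) = s * (m ^ α * m ^ (1 / p)) * (1 + θ) := by ring
      _ = s * (m + q) := by rw [hsplit, hq_eq]; ring
      _ ≤ p / (p - 1) * a * (m ^ α + q ^ α) := h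
      _ = a * m ^ α * (p * (1 + θ ^ α)) / (p - 1) := by rw [hqα]; field_simp
      _ ≤ a * m ^ α * ((p - 1) * C * (1 + θ)) / (p - 1) := by
          have := mul_one_add_rpow_le_of_root hp hC hroot hθ
          gcongr
      _ = C * a * (m ^ α * (1 + θ)) := by field_simp
  exact le_of_mul_le_mul_right key (by positivity)

lemma ENNReal.ofReal_mul_rpow_one_div_le_of_mul_add_le {p C : ℝ} (hp : 1 < p) (hC : 0 < C)
    (hroot : (p - 1) * C ^ p - p * C ^ (p - 1) - 1 = 0) {s : ℝ} (hs : 0 ≤ s) {A m q : ℝ≥0∞}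
    (hA : A ≠ ⊤) (hm : m ≠ ⊤) (hq : q ≠ ⊤)
    (h : ENNReal.ofReal s * (m + q) ≤
      ENNReal.ofReal (p / (p - 1)) * A * (m ^ ((p - 1) / p) + q ^ ((p - 1) / p))) :
    ENNReal.ofReal s * m ^ (1 / p) ≤ ENNReal.ofReal C * A := by
  have hp0 : 0 < p := by linarith
  have hK : 0 ≤ p / (p - 1) := div_nonneg hp0.le (by linarith)
  have hα : 0 ≤ (p - 1) / p := div_nonneg (by linarith) hp0.le
  rw [← ENNReal.ofReal_toReal hA, ← ENNReal.ofReal_toReal hm, ← ENNReal.ofReal_toReal hq,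
    ENNReal.ofReal_rpow_of_nonneg toReal_nonneg hα, ENNReal.ofReal_rpow_of_nonneg toReal_nonneg hα,
    ← ENNReal.ofReal_add toReal_nonneg toReal_nonneg,
    ← ENNReal.ofReal_add (by positivity) (by positivity), ← ENNReal.ofReal_mul hs,
    ← ENNReal.ofReal_mul hK, ← ENNReal.ofReal_mul (mul_nonneg hK toReal_nonneg),
    ENNReal.ofReal_le_ofReal_iff (mul_nonneg (mul_nonneg hK toReal_nonneg) (by positivity))] at h
  rw [← ENNReal.ofReal_toReal hA, ← ENNReal.ofReal_toReal hm,
    ENNReal.ofReal_rpow_of_nonneg toReal_nonneg (by positivity), ← ENNReal.ofReal_mul hs,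
    ← ENNReal.ofReal_mul hC.le]
  exact ENNReal.ofReal_le_ofReal <|
    mul_rpow_one_div_le_of_mul_add_le hp hC hroot toReal_nonneg toReal_nonneg toReal_nonneg h

lemma ENNReal.mul_rpow_one_div_le_iff {p : ℝ} (hp : 0 < p) {t m B : ℝ≥0∞} (ht₀ : t ≠ 0)
    (ht : t ≠ ⊤) : t * m ^ (1 / p) ≤ B ↔ m ≤ (B / t) ^ p := by
  rw [mul_comm, ← ENNReal.le_div_iff_mul_le (Or.inl ht₀) (Or.inl ht), one_div,
    ENNReal.rpow_inv_le_iff hp]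

lemma wnormE_le_iff {μ : Measure ℝ} {g : ℝ → ℝ≥0∞} {p : ℝ} (hp : 0 < p) {B : ℝ≥0∞} :
    wnormE μ g p ≤ B ↔
      ∀ t : ℝ, 0 < t → μ {x | ENNReal.ofReal t < g x} ≤ (B / ENNReal.ofReal t) ^ p := by
  simp only [wnormE, iSup₂_le_iff]
  exact forall₂_congr fun t ht ↦
    ENNReal.mul_rpow_one_div_le_iff hp (ENNReal.ofReal_pos.2 ht).ne' ENNReal.ofReal_ne_top

lemma mul_add_rpow_one_sub_div_eq {p a m : ℝ} (hp : 1 < p) (ha : 0 < a) (hm : 0 < m) :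
    m * (a * m ^ (-(1 / p))) + a ^ p * ((a * m ^ (-(1 / p))) ^ (1 - p) / (p - 1)) =
      p / (p - 1) * a * m ^ ((p - 1) / p) := by
  have hp0 : p ≠ 0 := by linarith
  have hp1 : p - 1 ≠ 0 := by linarith
  have h₁ : m * m ^ (-(1 / p)) = m ^ ((p - 1) / p) := by
    rw [show (p - 1) / p = 1 + -(1 / p) by field_simp; ring, Real.rpow_add hm, Real.rpow_one]
  have h₂ : (a * m ^ (-(1 / p))) ^ (1 - p) = a ^ (1 - p) * m ^ ((p - 1) / p) := by
    rw [Real.mul_rpow ha.le (by positivity), ← Real.rpow_mul hm.le]; congr 2; field_simp; ring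
  have h₃ : a ^ p * a ^ (1 - p) = a := by rw [← Real.rpow_add ha]; simp
  rw [h₂, ← mul_assoc m, mul_comm m, mul_assoc, h₁]
  field_simp
  linear_combination h₃

section Kolmogorov

variable {α : Type*} [MeasurableSpace α] {μ : Measure α} {g : α → ℝ}

lemma lintegral_Ioi_ofReal_rpow_neg {p b : ℝ} (hp : 1 < p) (hb : 0 < b) :
    ∫⁻ t in Ioi b, ENNReal.ofReal (t ^ (-p)) = ENNReal.ofReal (b ^ (1 - p) / (p - 1)) := by
  rw [← ofReal_integral_eq_lintegral_ofReal (integrableOn_Ioi_rpow_of_lt (by linarith) hb)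
    ((ae_restrict_iff' measurableSet_Ioi).2 (Filter.Eventually.of_forall
      fun t ht ↦ Real.rpow_nonneg (hb.trans ht).le _)),
    integral_Ioi_rpow_of_lt (by linarith) hb]
  rw [show -p + 1 = -(p - 1) by ring, div_neg, neg_div, neg_neg, neg_sub]

lemma setLIntegral_ofReal_eq_lintegral_measure_inter (hg0 : 0 ≤ g) (hg : Measurable g)
    (S : Set α) :
    ∫⁻ y in S, ENNReal.ofReal (g y) ∂μ = ∫⁻ t in Ioi 0, μ ({y | t < g y} ∩ S) := by
  rw [lintegral_eq_lintegral_meas_lt _ (Filter.Eventually.of_forall hg0) hg.aemeasurable]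
  congr! 2 with t
  exact Measure.restrict_apply (measurableSet_lt measurable_const hg)

variable {p : ℝ} {A : ℝ≥0∞}

lemma setLIntegral_le_of_distribution_le (hp : 1 < p) (hg0 : 0 ≤ g) (hg : Measurable g)
    (hA : ∀ t : ℝ, 0 < t → μ {y | t < g y} ≤ (A / ENNReal.ofReal t) ^ p) (S : Set α)
    {b : ℝ} (hb : 0 < b) :
    ∫⁻ y in S, ENNReal.ofReal (g y) ∂μ ≤
      μ S * ENNReal.ofReal b + A ^ p * ENNReal.ofReal (b ^ (1 - p) / (p - 1)) := by
  rw [setLIntegral_ofReal_eq_lintegral_measure_inter hg0 hg, ← Ioc_union_Ioi_eq_Ioi hb.le,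
    lintegral_union measurableSet_Ioi Ioc_disjoint_Ioi_same]
  gcongr
  · calc ∫⁻ t in Ioc 0 b, μ ({y | t < g y} ∩ S) ≤ ∫⁻ _ in Ioc 0 b, μ S :=
          lintegral_mono fun t ↦ measure_mono inter_subset_right
      _ = μ S * ENNReal.ofReal b := by simp
  · calc ∫⁻ t in Ioi b, μ ({y | t < g y} ∩ S)
        ≤ ∫⁻ t in Ioi b, A ^ p * ENNReal.ofReal (t ^ (-p)) := by
          refine setLIntegral_mono (by fun_prop) fun t ht ↦ ?_
          have ht0 : 0 < t := hb.trans ht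
          calc μ ({y | t < g y} ∩ S) ≤ (A / ENNReal.ofReal t) ^ p :=
                (measure_mono inter_subset_left).trans (hA t ht0)
            _ = A ^ p * ENNReal.ofReal (t ^ (-p)) := by
                rw [ENNReal.div_rpow_of_nonneg _ _ (by linarith), div_eq_mul_inv,
                  ← ENNReal.rpow_neg, ← ENNReal.ofReal_rpow_of_pos ht0]
      _ = A ^ p * ENNReal.ofReal (b ^ (1 - p) / (p - 1)) := by
          rw [lintegral_const_mul _ (by fun_prop), lintegral_Ioi_ofReal_rpow_neg hp hb]

lemma setLIntegral_le_mul_measure_rpow (hp : 1 < p) (hg0 : 0 ≤ g) (hg : Measurable g)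
    (hA_top : A ≠ ⊤) (hA : ∀ t : ℝ, 0 < t → μ {y | t < g y} ≤ (A / ENNReal.ofReal t) ^ p)
    {S : Set α} (hS : μ S ≠ ⊤) :
    ∫⁻ y in S, ENNReal.ofReal (g y) ∂μ ≤
      ENNReal.ofReal (p / (p - 1)) * A * μ S ^ ((p - 1) / p) := by
  rcases eq_or_ne (μ S) 0 with hS0 | hS0
  · simp [setLIntegral_measure_zero _ _ hS0]
  rcases eq_or_ne A 0 with rfl | hA0
  · have hnull : ∀ t ∈ Ioi (0 : ℝ), μ ({y | t < g y} ∩ S) ≤ 0 := fun t ht ↦ by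
      simpa [ENNReal.zero_rpow_of_pos (by linarith : 0 < p)] using
        (measure_mono inter_subset_left).trans (hA t ht)
    rw [setLIntegral_ofReal_eq_lintegral_measure_inter hg0 hg]
    exact (setLIntegral_mono' measurableSet_Ioi hnull).trans (by simp)
  -- split the layer-cake integral at the optimal height `b = A μ(S)^(-1/p)`
  set a := A.toReal
  set m := (μ S).toReal
  have ha : 0 < a := ENNReal.toReal_pos hA0 hA_top
  have hm : 0 < m := ENNReal.toReal_pos hS0 hS
  have hp0 : 0 < p := by linarith
  refine (setLIntegral_le_of_distribution_le hp hg0 hg hA S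
    (b := a * m ^ (-(1 / p))) (by positivity)).trans_eq ?_
  rw [← ENNReal.ofReal_toReal hA_top, ← ENNReal.ofReal_toReal hS,
    ENNReal.ofReal_rpow_of_pos ha, ENNReal.ofReal_rpow_of_pos hm, ← ENNReal.ofReal_mul hm.le,
    ← ENNReal.ofReal_mul (by positivity), ← ENNReal.ofReal_add (by positivity) (by positivity),
    ← ENNReal.ofReal_mul (by positivity), ← ENNReal.ofReal_mul (by positivity),
    mul_add_rpow_one_sub_div_eq hp ha hm]

end Kolmogorov

section Overlap

variable {α ι : Type*} [MeasurableSpace α] {μ : Measure α}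

lemma sum_setLIntegral_eq_of_card_le_two [DecidableEq ι] (S : Finset ι) {s : ι → Set α}
    [∀ x, DecidablePred fun i ↦ x ∈ s i] (hs : ∀ i, MeasurableSet (s i))
    (h2 : ∀ x, (S.filter fun i ↦ x ∈ s i).card ≤ 2)
    {g : α → ℝ≥0∞} (hg : Measurable g) :
    ∑ i ∈ S, ∫⁻ y in s i, g y ∂μ =
      ∫⁻ y in ⋃ i ∈ S, s i, g y ∂μ + ∫⁻ y in ⋃ i ∈ S, ⋃ j ∈ S.erase i, s i ∩ s j, g y ∂μ := by
  classical
  set U := ⋃ i ∈ S, s i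
  set O := ⋃ i ∈ S, ⋃ j ∈ S.erase i, s i ∩ s j
  have hU : MeasurableSet U := S.measurableSet_biUnion fun i _ ↦ hs i
  have hO : MeasurableSet O :=
    S.measurableSet_biUnion fun i _ ↦ (S.erase i).measurableSet_biUnion fun j _ ↦
      (hs i).inter (hs j)
  have hpoint : ∀ x, ∑ i ∈ S, (s i).indicator g x = U.indicator g x + O.indicator g x := by
    intro x
    have hmemU : x ∈ U ↔ 0 < (S.filter fun i ↦ x ∈ s i).card := by
      simp [U, Finset.card_pos, Finset.filter_nonempty_iff]
    have hmemO : x ∈ O ↔ 1 < (S.filter fun i ↦ x ∈ s i).card := by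
      simp only [O, Finset.one_lt_card, Finset.mem_filter, mem_iUnion, Finset.mem_erase,
        mem_inter_iff, exists_prop]
      constructor
      · rintro ⟨i, hi, j, ⟨hji, hj⟩, hxi, hxj⟩
        exact ⟨i, ⟨hi, hxi⟩, j, ⟨hj, hxj⟩, Ne.symm hji⟩
      · rintro ⟨i, ⟨hi, hxi⟩, j, ⟨hj, hxj⟩, hij⟩
        exact ⟨i, hi, j, ⟨Ne.symm hij, hj⟩, hxi, hxj⟩
    rw [Finset.sum_indicator_eq_sum_filter, Finset.sum_const, nsmul_eq_mul, indicator_apply,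
      indicator_apply, hmemU, hmemO]
    have := h2 x
    interval_cases (S.filter fun i ↦ x ∈ s i).card <;> simp [two_mul]
  calc ∑ i ∈ S, ∫⁻ y in s i, g y ∂μ = ∑ i ∈ S, ∫⁻ y, (s i).indicator g y ∂μ := by
        simp only [lintegral_indicator (hs _)]
    _ = ∫⁻ y, U.indicator g y + O.indicator g y ∂μ := by
        rw [← lintegral_finsetSum _ fun i _ ↦ hg.indicator (hs i)]
        simp only [hpoint]
    _ = _ := by
        rw [lintegral_add_left (hg.indicator hU), lintegral_indicator hU, lintegral_indicator hO]

end Overlap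

lemma exists_biUnion_Ioo_erase_eq {F : Finset (ℝ × ℝ)} {x : ℝ}
    (hx : 2 < (F.filter fun q ↦ x ∈ Ioo q.1 q.2).card) :
    ∃ J ∈ F, ⋃ q ∈ F.erase J, Ioo q.1 q.2 = ⋃ q ∈ F, Ioo q.1 q.2 := by
  set T := F.filter fun q ↦ x ∈ Ioo q.1 q.2
  have hT : T.Nonempty := Finset.card_pos.1 (by omega)
  -- `J` is any interval through `x` other than the one reaching furthest left (`u`) and the
  -- one reaching furthest right (`v`); then `J ⊆ u ∪ v`
  obtain ⟨u, hu, hu_min⟩ := T.exists_min_image (·.1) hT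
  obtain ⟨v, hv, hv_max⟩ := T.exists_max_image (·.2) hT
  obtain ⟨J, hJ⟩ : ((T.erase u).erase v).Nonempty := by
    have := Finset.pred_card_le_card_erase (s := T) (a := u)
    have := Finset.pred_card_le_card_erase (s := T.erase u) (a := v)
    exact Finset.card_pos.1 (by omega)
  simp only [Finset.mem_erase] at hJ
  obtain ⟨hJv, hJu, hJT⟩ := hJ
  have hcover : Ioo J.1 J.2 ⊆ Ioo u.1 u.2 ∪ Ioo v.1 v.2 := by
    intro y ⟨hJy, hyJ⟩
    by_cases hyu : y < u.2
    · exact Or.inl ⟨(hu_min J hJT).trans_lt hJy, hyu⟩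
    · have hvx := (Finset.mem_filter.1 hv).2.1
      have hxu := (Finset.mem_filter.1 hu).2.2
      exact Or.inr ⟨by linarith, hyJ.trans_le (hv_max J hJT)⟩
  have hF : ∀ q ∈ T, q ∈ F := fun q hq ↦ (Finset.mem_filter.1 hq).1
  refine ⟨J, hF J hJT, (biUnion_subset_biUnion_left fun q hq ↦ Finset.mem_of_mem_erase hq).antisymm
    (iUnion₂_subset fun q hq y hy ↦ ?_)⟩
  by_cases hqJ : q = J
  · subst hqJ
    rcases hcover hy with hy | hy
    · exact mem_biUnion (Finset.mem_erase.2 ⟨Ne.symm hJu, hF u hu⟩) hy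
    · exact mem_biUnion (Finset.mem_erase.2 ⟨Ne.symm hJv, hF v hv⟩) hy
  · exact mem_biUnion (Finset.mem_erase.2 ⟨hqJ, hq⟩) hy

lemma exists_subset_biUnion_Ioo_eq_card_le_two (F : Finset (ℝ × ℝ)) :
    ∃ S ⊆ F, ⋃ q ∈ S, Ioo q.1 q.2 = ⋃ q ∈ F, Ioo q.1 q.2 ∧
      ∀ x, (S.filter fun q ↦ x ∈ Ioo q.1 q.2).card ≤ 2 := by
  induction F using Finset.strongInduction with
  | H F ih =>
    by_cases h : ∀ x, (F.filter fun q ↦ x ∈ Ioo q.1 q.2).card ≤ 2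
    · exact ⟨F, subset_rfl, rfl, h⟩
    push Not at h
    obtain ⟨x, hx⟩ := h
    obtain ⟨J, hJ, hunion⟩ := exists_biUnion_Ioo_erase_eq hx
    obtain ⟨S, hS, hSu, hS2⟩ := ih _ (Finset.erase_ssubset hJ)
    exact ⟨S, hS.trans (Finset.erase_subset _ _), hSu.trans hunion, hS2⟩

lemma measure_biUnion_Ioo_le_of_le_setLIntegral {p C : ℝ} (hp : 1 < p) (hC : 0 < C)
    (hroot : (p - 1) * C ^ p - p * C ^ (p - 1) - 1 = 0) {μ : Measure ℝ} {g : ℝ → ℝ}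
    (hg0 : 0 ≤ g) (hg : Measurable g) {A : ℝ≥0∞} (hA_top : A ≠ ⊤)
    (hA : ∀ t : ℝ, 0 < t → μ {y | t < g y} ≤ (A / ENNReal.ofReal t) ^ p)
    {s : ℝ} (hs : 0 < s) (F : Finset (ℝ × ℝ))
    (hF : ∀ q ∈ F, μ (Ioo q.1 q.2) ≠ ⊤ ∧
      ENNReal.ofReal s * μ (Ioo q.1 q.2) ≤ ∫⁻ y in Ioo q.1 q.2, ENNReal.ofReal (g y) ∂μ) :
    μ (⋃ q ∈ F, Ioo q.1 q.2) ≤ (ENNReal.ofReal C * A / ENNReal.ofReal s) ^ p := by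
  have hp0 : 0 < p := by linarith
  obtain ⟨S, hSF, hSU, hS2⟩ := exists_subset_biUnion_Ioo_eq_card_le_two F
  rw [← hSU]
  set U := ⋃ q ∈ S, Ioo q.1 q.2
  set O := ⋃ q ∈ S, ⋃ r ∈ S.erase q, Ioo q.1 q.2 ∩ Ioo r.1 r.2
  have hU : μ U ≠ ⊤ :=
    ((measure_biUnion_finset_le S _).trans_lt
      (ENNReal.sum_lt_top.2 fun q hq ↦ (hF q (hSF hq)).1.lt_top)).ne
  have hO : μ O ≠ ⊤ := ne_top_of_le_ne_top hU <| measure_mono <|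
    iUnion₂_subset fun q hq ↦ iUnion₂_subset fun r _ ↦ inter_subset_left.trans
      (subset_biUnion_of_mem (u := fun q ↦ Ioo q.1 q.2) hq)
  have hsum : ∑ q ∈ S, μ (Ioo q.1 q.2) = μ U + μ O := by
    simpa only [setLIntegral_one] using sum_setLIntegral_eq_of_card_le_two (μ := μ) S
      (s := fun q ↦ Ioo q.1 q.2) (fun _ ↦ measurableSet_Ioo) hS2 (g := fun _ ↦ 1) measurable_const
  have key : ENNReal.ofReal s * (μ U + μ O) ≤
      ENNReal.ofReal (p / (p - 1)) * A * (μ U ^ ((p - 1) / p) + μ O ^ ((p - 1) / p)) :=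
    calc ENNReal.ofReal s * (μ U + μ O) = ∑ q ∈ S, ENNReal.ofReal s * μ (Ioo q.1 q.2) := by
          rw [← hsum, Finset.mul_sum]
      _ ≤ ∑ q ∈ S, ∫⁻ y in Ioo q.1 q.2, ENNReal.ofReal (g y) ∂μ :=
          Finset.sum_le_sum fun q hq ↦ (hF q (hSF hq)).2
      _ = (∫⁻ y in U, ENNReal.ofReal (g y) ∂μ) + ∫⁻ y in O, ENNReal.ofReal (g y) ∂μ :=
          sum_setLIntegral_eq_of_card_le_two S (s := fun q ↦ Ioo q.1 q.2)
            (fun _ ↦ measurableSet_Ioo) hS2 (g := fun y ↦ ENNReal.ofReal (g y)) (by fun_prop)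
      _ ≤ _ := by
          rw [mul_add]
          exact add_le_add (setLIntegral_le_mul_measure_rpow hp hg0 hg hA_top hA hU)
            (setLIntegral_le_mul_measure_rpow hp hg0 hg hA_top hA hO)
  rw [← ENNReal.mul_rpow_one_div_le_iff hp0 (ENNReal.ofReal_pos.2 hs).ne' ENNReal.ofReal_ne_top]
  exact ENNReal.ofReal_mul_rpow_one_div_le_of_mul_add_le hp hC hroot hs.le hA_top hU hO key

lemma measure_biUnion_le_of_forall_finset {α ι : Type*} [TopologicalSpace α]
    [SecondCountableTopology α] [MeasurableSpace α] (μ : Measure α) {t : Set ι}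
    {s : ι → Set α} (hs : ∀ i ∈ t, IsOpen (s i)) {B : ℝ≥0∞}
    (hB : ∀ F : Finset ι, ↑F ⊆ t → μ (⋃ i ∈ F, s i) ≤ B) :
    μ (⋃ i ∈ t, s i) ≤ B := by
  classical
  obtain ⟨T, hTt, hTc, hTU⟩ := TopologicalSpace.isOpen_biUnion_countable t s hs
  have := hTc.to_subtype
  have hmono : Monotone fun F : Finset T ↦ ⋃ i ∈ F, s i := fun _ _ h ↦
    iUnion₂_subset fun _ hi ↦ Finset.subset_set_biUnion_of_mem (f := fun i : T ↦ s i) (h hi)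
  rw [← hTU, biUnion_eq_iUnion, iUnion_eq_iUnion_finset, hmono.directed_le.measure_iUnion]
  refine iSup_le fun F ↦ ?_
  have := hB (F.image Subtype.val) fun i hi ↦ by
    obtain ⟨j, -, rfl⟩ := Finset.mem_image.1 hi
    exact hTt j.2
  rwa [Finset.set_biUnion_finset_image] at this

lemma setOf_lt_maximalE_subset (μ : Measure ℝ) (G : ℝ → ℝ≥0∞) (s : ℝ≥0∞) :
    {x | s < maximalE μ G x} ⊆ ⋃ q ∈ {q : ℝ × ℝ | μ (Ioo q.1 q.2) ≠ ⊤ ∧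
      s * μ (Ioo q.1 q.2) ≤ ∫⁻ y in Ioo q.1 q.2, G y ∂μ}, Ioo q.1 q.2 := by
  intro x hx
  simp only [mem_ofPred_eq, maximalE, lt_iSup_iff] at hx
  obtain ⟨a, b, hx, hpos, hlt⟩ := hx
  have htop : μ (Ioo a b) ≠ ⊤ := fun h ↦ by simp [h] at hlt
  refine mem_biUnion (x := (a, b)) ⟨htop, ?_⟩ hx
  calc s * μ (Ioo a b) ≤ ((μ (Ioo a b))⁻¹ * ∫⁻ y in Ioo a b, G y ∂μ) * μ (Ioo a b) := by
        gcongr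
    _ = ∫⁻ y in Ioo a b, G y ∂μ := by
        rw [mul_comm, ← mul_assoc, ENNReal.mul_inv_cancel hpos.ne' htop, one_mul]

/-- `‖M_μ f‖_{L^{p,∞}(dμ)} ≤ C_p ‖f‖_{L^{p,∞}(dμ)}` where `C_p` is
the unique positive root of `(p-1)x^p - p x^(p-1) - 1 = 0`. -/
theorem stmt_2 (p : ℝ) (hp : 1 < p) (C : ℝ) (hC : 0 < C)
    (hroot : (p - 1) * C ^ p - p * C ^ (p - 1) - 1 = 0)
    (μ : Measure ℝ) (f : ℝ → ℝ) (hf : Measurable f) :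
    wnormE μ (maximal μ f) p ≤ ENNReal.ofReal C * wnorm' μ f p := by
  have hp0 : 0 < p := by linarith
  set A := wnorm' μ f p
  rcases eq_or_ne A ⊤ with hA_top | hA_top
  · simp [hA_top, ENNReal.mul_top (ENNReal.ofReal_pos.2 hC).ne']
  have hA : ∀ t : ℝ, 0 < t → μ {y | t < |f y|} ≤ (A / ENNReal.ofReal t) ^ p := fun t ht ↦ by
    simpa [ENNReal.ofReal_lt_ofReal_iff_of_nonneg ht.le] using
      (wnormE_le_iff hp0).1 (le_refl A) t ht
  refine (wnormE_le_iff hp0).2 fun s hs ↦ ?_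
  refine (measure_mono (setOf_lt_maximalE_subset μ _ _)).trans <|
    measure_biUnion_le_of_forall_finset μ (fun _ _ ↦ isOpen_Ioo) fun F hF ↦ ?_
  exact measure_biUnion_Ioo_le_of_le_setLIntegral hp hC hroot (fun _ ↦ abs_nonneg _) hf.abs
    hA_top hA hs F fun q hq ↦ hF hq
end

section
/- Let μ be a positive Borel measure on ℝ and let f be a nonnegative μ-measurable function on ℝ with μ({f > t}) < ∞ for all t > 0. Let E ⊂ ℝ be a μ-measurable set with μ(E) < ∞ and let E* = (−μ(E)/2, μ(E)/2). Then ∫_E f dμ ≤ ∫_{E*} f*(x) dx, where the right-hand integral is with respect to Lebesgue measure. -/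
open MeasureTheory Set ENNReal

lemma rearr_measurable (μ : Measure ℝ) (f : ℝ → ℝ) : Measurable (rearr μ f) := by
  have h : Antitone (fun r : ℝ => sInf {t : ℝ≥0∞ | 0 < t ∧
      μ {y | t < ENNReal.ofReal |f y|} ≤ ENNReal.ofReal (2 * r)}) := by
    intro r₁ r₂ h12
    refine sInf_le_sInf fun t ⟨ht1, ht2⟩ => ⟨ht1, ht2.trans ?_⟩
    exact ENNReal.ofReal_le_ofReal (by linarith)
  exact h.measurable.comp measurable_abs

lemma rearr_lt (μ : Measure ℝ) (f : ℝ → ℝ) (hf0 : ∀ x, 0 ≤ f x) {t x : ℝ}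
    (ht : 0 < t) (hx : ENNReal.ofReal (2 * |x|) < μ {y | t < f y}) :
    ENNReal.ofReal t < rearr μ f x := by
  have habs : ∀ y, |f y| = f y := fun y => abs_of_nonneg (hf0 y)
  have hU : {y | t < f y} = ⋃ n : ℕ, {y | t + 1 / (n + 1) < f y} := by
    ext y
    simp only [mem_setOf_eq, mem_iUnion]
    constructor
    · intro hy
      obtain ⟨n, hn⟩ := exists_nat_one_div_lt (sub_pos.mpr hy)
      exact ⟨n, by push_cast at hn ⊢; linarith⟩
    · rintro ⟨n, hn⟩
      have : (0:ℝ) < 1 / (n + 1) := by positivity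
      linarith
  have hmono : Monotone (fun n : ℕ => {y | t + 1 / (n + 1 : ℝ) < f y}) := by
    intro n m hnm y hy
    have hy' : t + 1 / (n + 1 : ℝ) < f y := hy
    have h1 : (1 : ℝ) / (m + 1) ≤ 1 / (n + 1) := by
      apply one_div_le_one_div_of_le (by positivity)
      exact_mod_cast by omega
    show t + 1 / (m + 1 : ℝ) < f y
    linarith
  rw [hU, hmono.directed_le.measure_iUnion] at hx
  obtain ⟨n, hn⟩ := lt_iSup_iff.mp hx
  have hpos : (0:ℝ) < 1 / (n + 1) := by positivity
  have ht' : t < t + 1 / (n + 1) := by linarith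
  set t' : ℝ := t + 1 / (n + 1) with ht'def
  have hle : ENNReal.ofReal t' ≤ rearr μ f x := by
    refine le_sInf fun s ⟨hs0, hs2⟩ => ?_
    by_contra hcon
    push_neg at hcon
    have hsub : {y | t' < f y} ⊆ {y | s < ENNReal.ofReal |f y|} := by
      intro y hy
      have : ENNReal.ofReal t' ≤ ENNReal.ofReal |f y| := by
        rw [habs]; exact ENNReal.ofReal_le_ofReal (le_of_lt hy)
      exact lt_of_lt_of_le hcon this
    exact absurd (le_trans (measure_mono hsub) hs2) (not_le.mpr hn)
  exact lt_of_lt_of_le ((ENNReal.ofReal_lt_ofReal_iff (lt_trans ht ht')).mpr ht') hle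

lemma layer_le (ν : Measure ℝ) [SigmaFinite ν] {g : ℝ → ℝ≥0∞} (hg : Measurable g) :
    ∫⁻ t in Ioi (0:ℝ), ν {x | ENNReal.ofReal t < g x} ≤ ∫⁻ x, g x ∂ν := by
  have hset : MeasurableSet {p : ℝ × ℝ | ENNReal.ofReal p.1 < g p.2} :=
    measurableSet_lt (ENNReal.measurable_ofReal.comp measurable_fst) (hg.comp measurable_snd)
  have h1 : ∀ t : ℝ, ν {x | ENNReal.ofReal t < g x}
      = ∫⁻ x, ({p : ℝ × ℝ | ENNReal.ofReal p.1 < g p.2}.indicator 1 (t, x)) ∂ν := by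
    intro t
    rw [← lintegral_indicator_one (measurableSet_lt measurable_const hg : MeasurableSet {x : ℝ | ENNReal.ofReal t < g x})]
    refine lintegral_congr fun x => ?_
    simp only [Set.indicator_apply, mem_setOf_eq, mem_preimage, mem_Ioi, Pi.one_apply]
  have hbound : ∀ x : ℝ, (∫⁻ t in Ioi (0:ℝ),
      ({p : ℝ × ℝ | ENNReal.ofReal p.1 < g p.2}.indicator 1 (t, x))) ≤ g x := by
    intro x
    have heq : ∀ t : ℝ, ({p : ℝ × ℝ | ENNReal.ofReal p.1 < g p.2}.indicator 1 (t, x))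
        = ({t : ℝ | ENNReal.ofReal t < g x}.indicator (1 : ℝ → ℝ≥0∞) t) := by
      intro t; simp only [Set.indicator_apply, mem_setOf_eq, Pi.one_apply]
    simp only [heq]
    rw [lintegral_indicator_one (measurableSet_lt ENNReal.measurable_ofReal measurable_const)]
    rw [Measure.restrict_apply (measurableSet_lt ENNReal.measurable_ofReal measurable_const)]
    rcases eq_or_ne (g x) ⊤ with h | h
    · simp [h]
    · have hsub : {t : ℝ | ENNReal.ofReal t < g x} ∩ Ioi 0 ⊆ Ioo 0 (g x).toReal := by
        rintro t ⟨ht1, ht2⟩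
        exact ⟨ht2, (ENNReal.ofReal_lt_iff_lt_toReal (le_of_lt ht2) h).mp ht1⟩
      calc volume ({t : ℝ | ENNReal.ofReal t < g x} ∩ Ioi 0) ≤ volume (Ioo 0 (g x).toReal) :=
            measure_mono hsub
        _ ≤ g x := by rw [Real.volume_Ioo, sub_zero]; exact ENNReal.ofReal_toReal_le
  calc ∫⁻ t in Ioi (0:ℝ), ν {x | ENNReal.ofReal t < g x}
      = ∫⁻ t in Ioi (0:ℝ), ∫⁻ x,
          ({p : ℝ × ℝ | ENNReal.ofReal p.1 < g p.2}.indicator 1 (t, x)) ∂ν := by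
        simp only [h1]
    _ = ∫⁻ x, (∫⁻ t in Ioi (0:ℝ),
          ({p : ℝ × ℝ | ENNReal.ofReal p.1 < g p.2}.indicator 1 (t, x))) ∂ν :=
        lintegral_lintegral_swap (μ := volume.restrict (Ioi (0:ℝ))) (ν := ν)
          (f := fun t x => ({p : ℝ × ℝ | ENNReal.ofReal p.1 < g p.2}.indicator 1 (t, x)))
          (by exact (measurable_one.indicator hset).aemeasurable)
    _ ≤ ∫⁻ x, g x ∂ν := by exact lintegral_mono hbound

/-- `∫_E f dμ ≤ ∫_{E*} f*(x) dx` with `E* = (-μ(E)/2, μ(E)/2)`. -/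
theorem stmt_3 (μ : Measure ℝ) (f : ℝ → ℝ) (hf : Measurable f)
    (hf0 : ∀ x, 0 ≤ f x)
    (hfin : ∀ t : ℝ, 0 < t → μ {x | t < f x} < ⊤)
    (E : Set ℝ) (hE : MeasurableSet E) (hEfin : μ E < ⊤) :
    ∫⁻ x in E, ENNReal.ofReal (f x) ∂μ ≤
      ∫⁻ x in Ioo (-(μ E).toReal / 2) ((μ E).toReal / 2), rearr μ f x := by
  set Estar : Set ℝ := Ioo (-(μ E).toReal / 2) ((μ E).toReal / 2) with hEstar
  rw [lintegral_eq_lintegral_meas_lt (μ.restrict E) (ae_of_all _ hf0) hf.aemeasurable]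
  have key : ∀ t : ℝ, 0 < t → (μ.restrict E) {x | t < f x}
      ≤ (volume.restrict Estar) {x | ENNReal.ofReal t < rearr μ f x} := by
    intro t ht
    have hmeas : MeasurableSet {x | t < f x} := measurableSet_lt measurable_const hf
    have hDfin : μ {x | t < f x} ≠ ⊤ := (hfin t ht).ne
    set m : ℝ≥0∞ := min (μ E) (μ {x | t < f x}) with hm
    have hmtop : m ≠ ⊤ := by
      simp only [hm, ne_eq, min_eq_top, not_and_or]
      exact Or.inr hDfin
    have h1 : (μ.restrict E) {x | t < f x} ≤ m := by
      refine le_min ?_ ?_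
      · rw [Measure.restrict_apply hmeas]
        exact measure_mono inter_subset_right
      · exact Measure.restrict_le_self _
    have hsub : Ioo (-(m.toReal) / 2) (m.toReal / 2)
        ⊆ {x | ENNReal.ofReal t < rearr μ f x} ∩ Estar := by
      intro x hx
      have habs : |x| < m.toReal / 2 := by
        rw [abs_lt]; constructor
        · have := hx.1; linarith [hx.1]
        · exact hx.2
      have h2x : 2 * |x| < m.toReal := by linarith
      have hmE : m.toReal ≤ (μ E).toReal :=
        ENNReal.toReal_mono hEfin.ne (min_le_left _ _)
      have hmD : m.toReal ≤ (μ {x | t < f x}).toReal :=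
        ENNReal.toReal_mono hDfin (min_le_right _ _)
      constructor
      · refine rearr_lt μ f hf0 ht ?_
        have : ENNReal.ofReal (2 * |x|) < ENNReal.ofReal ((μ {x | t < f x}).toReal) := by
          refine ENNReal.ofReal_lt_ofReal_iff ?_ |>.mpr (by linarith)
          linarith [abs_nonneg x]
          -- 0 < toReal since 2|x| ≥ 0 < m.toReal ≤ toReal
        rwa [ENNReal.ofReal_toReal hDfin] at this
      · constructor
        · have : -(m.toReal) / 2 ≥ -(μ E).toReal / 2 := by linarith
          linarith [hx.1]
        · linarith [hx.2]
    calc (μ.restrict E) {x | t < f x} ≤ m := h1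
      _ = volume (Ioo (-(m.toReal) / 2) (m.toReal / 2)) := by
          rw [Real.volume_Ioo]
          rw [show m.toReal / 2 - -(m.toReal) / 2 = m.toReal by ring]
          exact (ENNReal.ofReal_toReal hmtop).symm
      _ ≤ volume ({x | ENNReal.ofReal t < rearr μ f x} ∩ Estar) := measure_mono hsub
      _ = (volume.restrict Estar) {x | ENNReal.ofReal t < rearr μ f x} := by
          rw [Measure.restrict_apply
            (measurableSet_lt measurable_const (rearr_measurable μ f))]
  calc ∫⁻ t in Ioi (0:ℝ), (μ.restrict E) {x | t < f x}
      ≤ ∫⁻ t in Ioi (0:ℝ), (volume.restrict Estar) {x | ENNReal.ofReal t < rearr μ f x} :=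
        setLIntegral_mono' measurableSet_Ioi fun t ht => key t ht
    _ ≤ ∫⁻ x in Estar, rearr μ f x := layer_le _ (rearr_measurable μ f)
end

section
/- Let 𝓕 be a finite set of open intervals in ℝ. Then there exist two subfamilies 𝓕₁ and 𝓕₂ of 𝓕 such that within each 𝓕ᵢ any two distinct intervals are disjoint, and the union of all intervals in 𝓕₁ together with all intervals in 𝓕₂ equals the union of all intervals in 𝓕. -/
open MeasureTheory Set ENNReal

private lemma stmt4_aux : ∀ n : ℕ, ∀ F : Finset (Set ℝ),
    F.card ≤ n → (∀ I ∈ F, ∃ a b : ℝ, I = Ioo a b) →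
    ∃ F1 F2 : Finset (Set ℝ), F1 ⊆ F ∧ F2 ⊆ F ∧
      (∀ I ∈ F1, ∀ J ∈ F1, I ≠ J → I ∩ J = ∅) ∧
      (∀ I ∈ F2, ∀ J ∈ F2, I ≠ J → I ∩ J = ∅) ∧
      (⋃₀ (F1 : Set (Set ℝ))) ∪ (⋃₀ (F2 : Set (Set ℝ))) = ⋃₀ (F : Set (Set ℝ)) := by
  intro n
  induction n with
  | zero =>
    intro F hcard _
    have : F = ∅ := Finset.card_eq_zero.1 (Nat.le_zero.1 hcard)
    subst this
    exact ⟨∅, ∅, Finset.Subset.refl _, Finset.Subset.refl _, by simp, by simp, by simp⟩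
  | succ n ih =>
    intro F hcard hF
    classical
    by_cases hred : ∃ I ∈ F, I ⊆ ⋃₀ ((F.erase I : Finset (Set ℝ)) : Set (Set ℝ))
    · obtain ⟨I, hI, hsub⟩ := hred
      obtain ⟨F1, F2, h1, h2, d1, d2, hu⟩ := ih (F.erase I)
        (by
          have := Finset.card_erase_of_mem hI
          omega)
        (fun J hJ => hF J (Finset.mem_of_mem_erase hJ))
      refine ⟨F1, F2, h1.trans (Finset.erase_subset _ _), h2.trans (Finset.erase_subset _ _),
        d1, d2, ?_⟩
      rw [hu]
      apply Set.Subset.antisymm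
      · exact Set.sUnion_subset_sUnion (by exact_mod_cast Finset.erase_subset _ _)
      · rintro x ⟨J, hJ, hxJ⟩
        by_cases hJI : J = I
        · exact hsub (hJI ▸ hxJ)
        · exact ⟨J, by exact_mod_cast Finset.mem_erase.2 ⟨hJI, by exact_mod_cast hJ⟩, hxJ⟩
    · push_neg at hred
      have hrep : ∀ I ∈ F, I = Ioo (sInf I) (sSup I) ∧ sInf I < sSup I := by
        intro I hI
        obtain ⟨a, b, rfl⟩ := hF I hI
        have hab : a < b := by
          by_contra h
          push_neg at h
          have he : Ioo a b = ∅ := Ioo_eq_empty (not_lt.2 h)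
          exact hred _ hI (he ▸ empty_subset _)
        rw [csInf_Ioo hab, csSup_Ioo hab]
        exact ⟨rfl, hab⟩
      have hnc : ∀ I ∈ F, ∀ J ∈ F, I ⊆ J → I = J := by
        intro I hI J hJ hsub
        by_contra hne
        exact hred I hI (hsub.trans (subset_sUnion_of_mem
          (by exact_mod_cast Finset.mem_erase.2 ⟨fun h => hne h.symm, hJ⟩)))
      have hinj : ∀ I ∈ F, ∀ J ∈ F, sInf I = sInf J → I = J := by
        intro I hI J hJ hab
        rcases le_total (sSup I) (sSup J) with h | h
        · refine hnc I hI J hJ ?_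
          rw [(hrep I hI).1, (hrep J hJ).1, hab]
          exact Ioo_subset_Ioo le_rfl h
        · refine (hnc J hJ I hI ?_).symm
          rw [(hrep I hI).1, (hrep J hJ).1, hab]
          exact Ioo_subset_Ioo le_rfl h
      have key : ∀ I ∈ F, ∀ J ∈ F, sInf I < sInf J →
          (∃ K ∈ F, sInf I < sInf K ∧ sInf K < sInf J) → sSup I ≤ sInf J := by
        rintro I hI J hJ hIJ ⟨K, hK, h1, h2⟩
        by_contra h
        push_neg at h
        have hKI : K ≠ I := fun e => absurd (e ▸ h1) (lt_irrefl _)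
        have hKJ : K ≠ J := fun e => absurd (e ▸ h2) (lt_irrefl _)
        have hbKJ : sSup K ≤ sSup J := by
          by_contra hb
          push_neg at hb
          have hJK : J ⊆ K := by
            rw [(hrep J hJ).1, (hrep K hK).1]
            exact Ioo_subset_Ioo h2.le hb.le
          exact hKJ ((hnc J hJ K hK hJK).symm)
        apply hred K hK
        intro x hx
        rw [(hrep K hK).1] at hx
        by_cases hxI : x < sSup I
        · refine ⟨I, by exact_mod_cast Finset.mem_erase.2 ⟨Ne.symm hKI, hI⟩, ?_⟩
          rw [(hrep I hI).1]
          exact ⟨h1.trans hx.1, hxI⟩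
        · refine ⟨J, by exact_mod_cast Finset.mem_erase.2 ⟨Ne.symm hKJ, hJ⟩, ?_⟩
          rw [(hrep J hJ).1]
          exact ⟨h.trans_le (not_lt.1 hxI), hx.2.trans_le hbKJ⟩
      set r : Set ℝ → ℕ := fun I => (F.filter (fun J => sInf J < sInf I)).card with hr
      have hrank_lt : ∀ I ∈ F, ∀ J ∈ F, sInf I < sInf J → r I < r J := by
        intro I hI J hJ h
        apply Finset.card_lt_card
        rw [Finset.ssubset_iff_of_subset]
        · exact ⟨I, Finset.mem_filter.2 ⟨hI, h⟩, by simp [Finset.mem_filter]⟩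
        · intro K hK
          simp only [Finset.mem_filter] at hK ⊢
          exact ⟨hK.1, hK.2.trans h⟩
      have exists_between : ∀ I ∈ F, ∀ J ∈ F, sInf I < sInf J → r I + 2 ≤ r J →
          ∃ K ∈ F, sInf I < sInf K ∧ sInf K < sInf J := by
        intro I hI J hJ hIJ hr2
        by_contra hno
        push_neg at hno
        have hsub : F.filter (fun K => sInf K < sInf J) ⊆
            insert I (F.filter (fun K => sInf K < sInf I)) := by
          intro K hK
          simp only [Finset.mem_filter] at hK
          rcases lt_trichotomy (sInf K) (sInf I) with h | h | h
          · exact Finset.mem_insert.2 (Or.inr (Finset.mem_filter.2 ⟨hK.1, h⟩))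
          · exact Finset.mem_insert.2 (Or.inl (hinj K hK.1 I hI h))
          · exact absurd hK.2 (not_lt.2 (hno K hK.1 h))
        have h1 := Finset.card_le_card hsub
        have h2 := Finset.card_insert_le I (F.filter (fun K => sInf K < sInf I))
        simp only [hr] at hr2
        omega
      have main : ∀ I ∈ F, ∀ J ∈ F, I ≠ J → (Even (r I) ↔ Even (r J)) → I ∩ J = ∅ := by
        have core : ∀ I ∈ F, ∀ J ∈ F, sInf I < sInf J → (Even (r I) ↔ Even (r J)) →
            I ∩ J = ∅ := by
          intro I hI J hJ hlt hpar
          have hrlt := hrank_lt I hI J hJ hlt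
          have h2 : r I + 2 ≤ r J := by
            rw [Nat.even_iff, Nat.even_iff] at hpar
            omega
          obtain ⟨K, hK, hk1, hk2⟩ := exists_between I hI J hJ hlt h2
          have hle := key I hI J hJ hlt ⟨K, hK, hk1, hk2⟩
          rw [(hrep I hI).1, (hrep J hJ).1, Set.Ioo_inter_Ioo]
          exact Ioo_eq_empty (not_lt.2 ((min_le_left _ _).trans
            (hle.trans (le_max_right _ _))))
        intro I hI J hJ hne hpar
        rcases lt_trichotomy (sInf I) (sInf J) with h | h | h
        · exact core I hI J hJ h hpar
        · exact absurd (hinj I hI J hJ h) hne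
        · rw [Set.inter_comm]
          exact core J hJ I hI h hpar.symm
      refine ⟨F.filter (fun I => Even (r I)), F.filter (fun I => ¬ Even (r I)),
        Finset.filter_subset _ _, Finset.filter_subset _ _, ?_, ?_, ?_⟩
      · intro I hI J hJ hne
        simp only [Finset.mem_filter] at hI hJ
        exact main I hI.1 J hJ.1 hne (iff_of_true hI.2 hJ.2)
      · intro I hI J hJ hne
        simp only [Finset.mem_filter] at hI hJ
        exact main I hI.1 J hJ.1 hne (iff_of_false hI.2 hJ.2)
      · rw [← Set.sUnion_union, ← Finset.coe_union,
          Finset.filter_union_filter_not_eq]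

/-- a finite family of open intervals splits into two subfamilies of
pairwise disjoint intervals with the same union. -/
theorem stmt_4 (F : Finset (Set ℝ)) (hF : ∀ I ∈ F, ∃ a b : ℝ, I = Ioo a b) :
    ∃ F1 F2 : Finset (Set ℝ), F1 ⊆ F ∧ F2 ⊆ F ∧
      (∀ I ∈ F1, ∀ J ∈ F1, I ≠ J → I ∩ J = ∅) ∧
      (∀ I ∈ F2, ∀ J ∈ F2, I ≠ J → I ∩ J = ∅) ∧
      (⋃₀ (F1 : Set (Set ℝ))) ∪ (⋃₀ (F2 : Set (Set ℝ))) = ⋃₀ (F : Set (Set ℝ)) :=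
  stmt4_aux F.card F le_rfl hF
end

section
/- Let f be a nonnegative Lebesgue-measurable function on ℝ that is distributionally symmetric and satisfies Leb({f > t}) < ∞ for all t > 0, and let a, b ≥ 0. Then ∫_{−a}^{b} f(x) dx ≤ ∫_{−a}^{b} f*(x) dx, where f* is the symmetric decreasing rearrangement of f with respect to Lebesgue measure. -/
open MeasureTheory Set ENNReal

/-- for distributionally symmetric `f` and `a, b ≥ 0`,
`∫_{-a}^{b} f ≤ ∫_{-a}^{b} f*`. -/
theorem stmt_5 (f : ℝ → ℝ) (hf : Measurable f) (hf0 : ∀ x, 0 ≤ f x)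
    (hsym : DistribSymm f)
    (hfin : ∀ t : ℝ, 0 < t → volume {x | t < f x} < ⊤)
    (a b : ℝ) (ha : 0 ≤ a) (hb : 0 ≤ b) :
    ∫⁻ x in Ioc (-a) b, ENNReal.ofReal (f x) ≤ ∫⁻ x in Ioc (-a) b, rearr volume f x := by
  set I : Set ℝ := Ioc (-a) b with hI
  set m : ℝ → ℝ≥0∞ := fun t => volume {y | t < f y} with hm
  have m_anti : Antitone m := fun s t hst =>
    measure_mono (fun y hy => lt_of_le_of_lt hst hy)
  have m_meas : Measurable m := m_anti.measurable
  have hmeasA : ∀ x : ℝ, MeasurableSet {t : ℝ | ENNReal.ofReal (2 * |x|) < m t} :=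
    fun x => measurableSet_lt measurable_const m_meas
  have hmeasB : ∀ t : ℝ, MeasurableSet {x : ℝ | ENNReal.ofReal (2 * |x|) < m t} :=
    fun t => measurableSet_lt (by measurability) measurable_const
  have hmeasf : ∀ t : ℝ, MeasurableSet {x | t < f x} :=
    fun t => measurableSet_lt measurable_const hf
  -- Layer cake for the LHS
  have h_layer : ∫⁻ x in I, ENNReal.ofReal (f x)
      = ∫⁻ t in Ioi (0:ℝ), volume ({x | t < f x} ∩ I) := by
    have := lintegral_eq_lintegral_meas_lt (volume.restrict I)
      (Filter.Eventually.of_forall hf0) hf.aemeasurable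
    rw [this]
    refine lintegral_congr fun t => ?_
    rw [Measure.restrict_apply (hmeasf t)]
  -- Claim 1 : pointwise lower bound for the rearrangement
  have claim1 : ∀ x : ℝ,
      volume ({t : ℝ | ENNReal.ofReal (2 * |x|) < m t} ∩ Ioi 0) ≤ rearr volume f x := by
    intro x
    rcases eq_top_or_lt_top (rearr volume f x) with h | h
    · rw [h]; exact le_top
    have key : ∀ t : ℝ, 0 < t → ENNReal.ofReal (2 * |x|) < m t →
        ENNReal.ofReal t ≤ rearr volume f x := by
      intro t ht hmt
      refine le_sInf ?_
      rintro s ⟨hs0, hsle⟩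
      by_contra hlt
      push_neg at hlt
      have hsub : {y | t < f y} ⊆ {y | s < ENNReal.ofReal |f y|} := by
        intro y hy
        have h1 : ENNReal.ofReal t ≤ ENNReal.ofReal |f y| :=
          ENNReal.ofReal_le_ofReal (le_trans (le_of_lt hy) (le_abs_self _))
        exact lt_of_lt_of_le hlt h1
      exact absurd (le_trans (measure_mono hsub) hsle |>.trans_lt' hmt) (lt_irrefl _)
    have hsub2 : {t : ℝ | ENNReal.ofReal (2 * |x|) < m t} ∩ Ioi 0
        ⊆ Ioc 0 (rearr volume f x).toReal := by
      rintro t ⟨hmt, ht⟩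
      exact ⟨ht, (ENNReal.ofReal_le_iff_le_toReal h.ne).1 (key t ht hmt)⟩
    calc volume ({t : ℝ | ENNReal.ofReal (2 * |x|) < m t} ∩ Ioi 0)
        ≤ volume (Ioc 0 (rearr volume f x).toReal) := measure_mono hsub2
      _ = ENNReal.ofReal ((rearr volume f x).toReal - 0) := Real.volume_Ioc
      _ = rearr volume f x := by rw [sub_zero, ENNReal.ofReal_toReal h.ne]
  -- Claim 3 : distribution comparison
  have claim3 : ∀ t : ℝ, 0 < t →
      volume ({x | t < f x} ∩ I)
        ≤ volume ({x : ℝ | ENNReal.ofReal (2 * |x|) < m t} ∩ I) := by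
    intro t ht
    have hMfin : m t ≠ ⊤ := (hfin t ht).ne
    set r : ℝ := (m t).toReal / 2 with hr
    have hr0 : 0 ≤ r := by positivity
    have hofr : ENNReal.ofReal r = m t / 2 := by
      rw [hr, ENNReal.ofReal_div_of_pos (by norm_num)]
      rw [ENNReal.ofReal_toReal hMfin]
      norm_num
    have hSneg : volume {x : ℝ | x < 0 ∧ t < f x} ≤ ENNReal.ofReal r := by
      have hmeas2 : MeasurableSet {x : ℝ | 0 < x ∧ t < f x} := by
        have : {x : ℝ | 0 < x ∧ t < f x} = Ioi 0 ∩ {x | t < f x} := rfl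
        rw [this]; exact measurableSet_Ioi.inter (hmeasf t)
      have hdisj : Disjoint {x : ℝ | x < 0 ∧ t < f x} {x : ℝ | 0 < x ∧ t < f x} := by
        rw [Set.disjoint_left]
        rintro x ⟨hx, _⟩ ⟨hx', _⟩
        exact absurd (hx.trans hx') (lt_irrefl x)
      have hunion : volume {x : ℝ | x < 0 ∧ t < f x} + volume {x : ℝ | 0 < x ∧ t < f x}
          ≤ m t := by
        rw [← measure_union hdisj hmeas2]
        exact measure_mono (by rintro x (⟨_, hx⟩ | ⟨_, hx⟩) <;> exact hx)
      rw [hsym t ht] at hunion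
      rw [hofr, ENNReal.le_div_iff_mul_le (Or.inl two_ne_zero) (Or.inl ofNat_ne_top), mul_two]
      exact hunion
    have h1 : volume ({x | t < f x} ∩ Ioc (-a) 0) ≤ ENNReal.ofReal (min a r) := by
      rcases le_total a r with hle | hle
      · rw [min_eq_left hle]
        calc volume ({x | t < f x} ∩ Ioc (-a) 0) ≤ volume (Ioc (-a) 0) :=
              measure_mono inter_subset_right
          _ = ENNReal.ofReal a := by rw [Real.volume_Ioc]; norm_num
      · rw [min_eq_right hle]
        have hsub : {x | t < f x} ∩ Ioc (-a) 0 ⊆ {x : ℝ | x < 0 ∧ t < f x} ∪ {0} := by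
          rintro x ⟨hfx, _, hx0⟩
          rcases lt_or_eq_of_le hx0 with h' | h'
          · exact Or.inl ⟨h', hfx⟩
          · exact Or.inr h'
        calc volume ({x | t < f x} ∩ Ioc (-a) 0)
            ≤ volume ({x : ℝ | x < 0 ∧ t < f x} ∪ {0}) := measure_mono hsub
          _ ≤ volume {x : ℝ | x < 0 ∧ t < f x} + volume ({0} : Set ℝ) := measure_union_le _ _
          _ = volume {x : ℝ | x < 0 ∧ t < f x} := by rw [Real.volume_singleton, add_zero]
          _ ≤ ENNReal.ofReal r := hSneg
    have h2 : volume ({x | t < f x} ∩ Ioc 0 b) ≤ ENNReal.ofReal (min b r) := by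
      rcases le_total b r with hle | hle
      · rw [min_eq_left hle]
        calc volume ({x | t < f x} ∩ Ioc 0 b) ≤ volume (Ioc 0 b) :=
              measure_mono inter_subset_right
          _ = ENNReal.ofReal b := by rw [Real.volume_Ioc]; norm_num
      · rw [min_eq_right hle]
        have hsub : {x | t < f x} ∩ Ioc 0 b ⊆ {x : ℝ | 0 < x ∧ t < f x} := by
          rintro x ⟨hfx, hx0, _⟩
          exact ⟨hx0, hfx⟩
        calc volume ({x | t < f x} ∩ Ioc 0 b)
            ≤ volume {x : ℝ | 0 < x ∧ t < f x} := measure_mono hsub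
          _ = volume {x : ℝ | x < 0 ∧ t < f x} := hsym t ht
          _ ≤ ENNReal.ofReal r := hSneg
    have hsubIoo : Ioo (-(min a r)) (min b r)
        ⊆ {x : ℝ | ENNReal.ofReal (2 * |x|) < m t} ∩ I := by
      rintro x ⟨hx1, hx2⟩
      have habs : |x| < r := by
        rw [abs_lt]
        constructor
        · have : -r ≤ -(min a r) := by simp [min_le_right]
          linarith
        · exact lt_of_lt_of_le hx2 (min_le_right b r)
      have h2r : (0:ℝ) < 2 * r := by
        have : (0:ℝ) ≤ |x| := abs_nonneg x
        linarith
      constructor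
      · show ENNReal.ofReal (2 * |x|) < m t
        rw [← ENNReal.ofReal_toReal hMfin]
        have : (m t).toReal = 2 * r := by rw [hr]; ring
        rw [this]
        exact (ENNReal.ofReal_lt_ofReal_iff h2r).2 (by linarith)
      · constructor
        · have : -a ≤ -(min a r) := by simp [min_le_left]
          linarith
        · exact le_of_lt (lt_of_lt_of_le hx2 (min_le_left b r))
    have hIsplit : {x | t < f x} ∩ I
        = ({x | t < f x} ∩ Ioc (-a) 0) ∪ ({x | t < f x} ∩ Ioc 0 b) := by
      rw [hI, ← inter_union_distrib_left, Ioc_union_Ioc_eq_Ioc (by linarith) hb]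
    calc volume ({x | t < f x} ∩ I)
        ≤ volume ({x | t < f x} ∩ Ioc (-a) 0) + volume ({x | t < f x} ∩ Ioc 0 b) := by
          rw [hIsplit]; exact measure_union_le _ _
      _ ≤ ENNReal.ofReal (min a r) + ENNReal.ofReal (min b r) := add_le_add h1 h2
      _ = volume (Ioo (-(min a r)) (min b r)) := by
          rw [Real.volume_Ioo, ← ENNReal.ofReal_add (le_min ha hr0) (le_min hb hr0)]
          ring_nf
      _ ≤ volume ({x : ℝ | ENNReal.ofReal (2 * |x|) < m t} ∩ I) := measure_mono hsubIoo
  -- Tonelli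
  have hsmeas : MeasurableSet {p : ℝ × ℝ | ENNReal.ofReal (2 * |p.1|) < m p.2} := by
    apply measurableSet_lt
    · measurability
    · exact m_meas.comp measurable_snd
  have tonelli :
      ∫⁻ t in Ioi (0:ℝ), volume ({x : ℝ | ENNReal.ofReal (2 * |x|) < m t} ∩ I)
        = ∫⁻ x in I, volume ({t : ℝ | ENNReal.ofReal (2 * |x|) < m t} ∩ Ioi 0) := by
    have h1 := Measure.prod_apply (μ := volume.restrict I) (ν := volume.restrict (Ioi 0)) hsmeas
    have h2 := Measure.prod_apply_symm (μ := volume.restrict I) (ν := volume.restrict (Ioi 0))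
      hsmeas
    rw [h1] at h2
    calc ∫⁻ t in Ioi (0:ℝ), volume ({x : ℝ | ENNReal.ofReal (2 * |x|) < m t} ∩ I)
        = ∫⁻ t in Ioi (0:ℝ),
            (volume.restrict I) ((fun x => (x, t)) ⁻¹' {p : ℝ × ℝ | ENNReal.ofReal (2 * |p.1|) < m p.2}) := by
          refine lintegral_congr fun t => ?_
          simp only [preimage_setOf_eq]
          rw [Measure.restrict_apply (hmeasB t)]
      _ = ∫⁻ x in I,
            (volume.restrict (Ioi 0)) (Prod.mk x ⁻¹' {p : ℝ × ℝ | ENNReal.ofReal (2 * |p.1|) < m p.2}) := h2.symm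
      _ = ∫⁻ x in I, volume ({t : ℝ | ENNReal.ofReal (2 * |x|) < m t} ∩ Ioi 0) := by
          refine lintegral_congr fun x => ?_
          simp only [preimage_setOf_eq]
          rw [Measure.restrict_apply (hmeasA x)]
  calc ∫⁻ x in I, ENNReal.ofReal (f x)
      = ∫⁻ t in Ioi (0:ℝ), volume ({x | t < f x} ∩ I) := h_layer
    _ ≤ ∫⁻ t in Ioi (0:ℝ), volume ({x : ℝ | ENNReal.ofReal (2 * |x|) < m t} ∩ I) := by
        refine lintegral_mono_ae ?_
        filter_upwards [ae_restrict_mem measurableSet_Ioi] with t ht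
        exact claim3 t ht
    _ = ∫⁻ x in I, volume ({t : ℝ | ENNReal.ofReal (2 * |x|) < m t} ∩ Ioi 0) := tonelli
    _ ≤ ∫⁻ x in I, rearr volume f x := lintegral_mono fun x => claim1 x
end

section
/- Let f be a nonnegative Lebesgue-measurable function on ℝ that is distributionally symmetric and satisfies Leb({f > t}) < ∞ for all t > 0, and let a ≥ 0. Then ∫_{−a}^{0} f(x) dx ≤ ∫_{−a}^{0} f*(x) dx, where f* is the symmetric decreasing rearrangement of f with respect to Lebesgue measure. -/
open MeasureTheory Set ENNReal

/-- for distributionally symmetric `f` and `a ≥ 0`,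
`∫_{-a}^{0} f ≤ ∫_{-a}^{0} f*`. -/
theorem stmt_6 (f : ℝ → ℝ) (hf : Measurable f) (hf0 : ∀ x, 0 ≤ f x)
    (hsym : DistribSymm f)
    (hfin : ∀ t : ℝ, 0 < t → volume {x | t < f x} < ⊤)
    (a : ℝ) (ha : 0 ≤ a) :
    ∫⁻ x in Ioc (-a) 0, ENNReal.ofReal (f x) ≤ ∫⁻ x in Ioc (-a) 0, rearr volume f x := by
  set ν := volume.restrict (Ioc (-a) 0) with hν
  set m : ℝ → ℝ≥0∞ := fun t => volume {x | t < f x} with hm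
  have hfin' : ∀ t : ℝ, 0 < t → m t ≠ ⊤ := fun t ht => (hfin t ht).ne
  have habs : ∀ y, |f y| = f y := fun y => abs_of_nonneg (hf0 y)
  have hset : ∀ t : ℝ, 0 ≤ t →
      {y : ℝ | ENNReal.ofReal t < ENNReal.ofReal |f y|} = {y | t < f y} := by
    intro t ht; ext y
    simp [habs y, ENNReal.ofReal_lt_ofReal_iff_of_nonneg ht]
  have hmeas_lt : ∀ t : ℝ, MeasurableSet {x : ℝ | t < f x} :=
    fun t => measurableSet_lt measurable_const hf
  have hrearr_def : ∀ x : ℝ, rearr volume f x =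
      sInf {s : ℝ≥0∞ | 0 < s ∧
        volume {y | s < ENNReal.ofReal |f y|} ≤ ENNReal.ofReal (2 * |x|)} :=
    fun x => rfl
  -- measurability of the rearrangement
  set G : ℝ → ℝ≥0∞ := fun u =>
    sInf {s : ℝ≥0∞ | 0 < s ∧
      volume {y | s < ENNReal.ofReal |f y|} ≤ ENNReal.ofReal u} with hG
  have hGanti : Antitone G := by
    intro u v huv
    exact sInf_le_sInf fun s hs => ⟨hs.1, hs.2.trans (ENNReal.ofReal_le_ofReal huv)⟩
  have hgmeas : Measurable (rearr volume f) := by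
    have : rearr volume f = fun x => G (2 * |x|) := funext fun x => rfl
    rw [this]
    exact hGanti.measurable.comp (measurable_abs.const_mul 2)
  -- right continuity of the distribution function
  have hrc : ∀ t : ℝ, 0 < t → ∀ c : ℝ≥0∞, c < m t → ∃ s : ℝ, t < s ∧ c < m s := by
    intro t ht c hc
    have hU : {x : ℝ | t < f x} = ⋃ n : ℕ, {x : ℝ | t + 1 / (n + 1) < f x} := by
      ext y
      simp only [mem_setOf_eq, mem_iUnion]
      constructor
      · intro h
        obtain ⟨n, hn⟩ := exists_nat_one_div_lt (sub_pos.mpr h)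
        exact ⟨n, by push_cast at hn ⊢; linarith⟩
      · rintro ⟨n, hn⟩
        have h1 : (0 : ℝ) < 1 / (n + 1) := by positivity
        linarith
    have hmono : Monotone (fun n : ℕ => {x : ℝ | t + 1 / (n + 1 : ℝ) < f x}) := by
      intro i j hij y hy
      simp only [mem_setOf_eq] at *
      have hij' : (i : ℝ) ≤ j := Nat.cast_le.mpr hij
      have h1 : (1 : ℝ) / (j + 1) ≤ 1 / (i + 1) :=
        one_div_le_one_div_of_le (by positivity) (by linarith)
      linarith
    have hsup := hmono.measure_iUnion (μ := volume)
    have hc' : c < ⨆ n : ℕ, volume {x : ℝ | t + 1 / (n + 1 : ℝ) < f x} := by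
      rw [← hsup, ← hU]; exact hc
    obtain ⟨n, hn⟩ := lt_iSup_iff.mp hc'
    exact ⟨t + 1 / (n + 1), lt_add_of_pos_right t (by positivity), hn⟩
  -- characterization of superlevel sets of the rearrangement
  have hchar : ∀ t : ℝ, 0 < t → ∀ x : ℝ,
      (ENNReal.ofReal t < rearr volume f x ↔ ENNReal.ofReal (2 * |x|) < m t) := by
    intro t ht x
    constructor
    · intro h
      by_contra hcon
      push_neg at hcon
      have ht' : ENNReal.ofReal t ∈ {s : ℝ≥0∞ | 0 < s ∧
          volume {y | s < ENNReal.ofReal |f y|} ≤ ENNReal.ofReal (2 * |x|)} := by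
        refine ⟨ENNReal.ofReal_pos.mpr ht, ?_⟩
        rw [hset t ht.le]
        exact hcon
      have := sInf_le ht'
      rw [← hrearr_def x] at this
      exact absurd this (not_le.mpr h)
    · intro h
      obtain ⟨s, hts, hs⟩ := hrc t ht _ h
      have hstep : ENNReal.ofReal s ≤ rearr volume f x := by
        rw [hrearr_def x]
        apply le_sInf
        rintro u ⟨hu0, hu⟩
        by_contra hcon
        push_neg at hcon
        have hsub : {y : ℝ | ENNReal.ofReal s < ENNReal.ofReal |f y|} ⊆
            {y : ℝ | u < ENNReal.ofReal |f y|} :=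
          fun y hy => lt_of_le_of_lt hcon.le hy
        have hle : m s ≤ ENNReal.ofReal (2 * |x|) := by
          calc m s = volume {y : ℝ | ENNReal.ofReal s < ENNReal.ofReal |f y|} := by
                rw [hset s (ht.trans hts).le]
            _ ≤ volume {y : ℝ | u < ENNReal.ofReal |f y|} := measure_mono hsub
            _ ≤ _ := hu
        exact absurd hs (not_lt.mpr hle)
      calc ENNReal.ofReal t < ENNReal.ofReal s := by
            rw [ENNReal.ofReal_lt_ofReal_iff_of_nonneg ht.le]; exact hts
        _ ≤ _ := hstep
  -- finiteness of the rearrangement away from 0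
  have htop : ∀ x : ℝ, x ≠ 0 → rearr volume f x ≠ ⊤ := by
    intro x hx
    have h2 : 0 < ENNReal.ofReal (2 * |x|) := ENNReal.ofReal_pos.mpr (by positivity)
    have hI : ⋂ n : ℕ, {y : ℝ | (n : ℝ) + 1 < f y} = ∅ := by
      ext y
      simp only [mem_iInter, mem_setOf_eq, mem_empty_iff_false, iff_false, not_forall, not_lt]
      obtain ⟨n, hn⟩ := exists_nat_ge (f y)
      exact ⟨n, by linarith⟩
    have hanti : Antitone (fun n : ℕ => {y : ℝ | (n : ℝ) + 1 < f y}) := by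
      intro i j hij y hy
      simp only [mem_setOf_eq] at *
      have hij' : (i : ℝ) ≤ j := Nat.cast_le.mpr hij
      linarith
    have hinf := hanti.measure_iInter (μ := volume)
      (fun n => (hmeas_lt _).nullMeasurableSet)
      ⟨0, by simpa using (hfin 1 one_pos).ne⟩
    rw [hI] at hinf
    have h0 : (⨅ n : ℕ, volume {y : ℝ | (n : ℝ) + 1 < f y}) = 0 := by
      rw [← hinf, measure_empty]
    have hlt : (⨅ n : ℕ, volume {y : ℝ | (n : ℝ) + 1 < f y}) < ENNReal.ofReal (2 * |x|) := by
      rw [h0]; exact h2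
    obtain ⟨n, hn⟩ := iInf_lt_iff.mp hlt
    have hmem : ENNReal.ofReal ((n : ℝ) + 1) ∈ {s : ℝ≥0∞ | 0 < s ∧
        volume {y | s < ENNReal.ofReal |f y|} ≤ ENNReal.ofReal (2 * |x|)} := by
      refine ⟨ENNReal.ofReal_pos.mpr (by positivity), ?_⟩
      rw [hset _ (by positivity)]
      exact hn.le
    have := sInf_le hmem
    rw [← hrearr_def x] at this
    exact ne_top_of_le_ne_top ENNReal.ofReal_ne_top this
  -- symmetry: measure of the negative part is half
  have hhalf : ∀ t : ℝ, 0 < t → volume {x : ℝ | x < 0 ∧ t < f x} = m t / 2 := by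
    intro t ht
    have hPset : {x : ℝ | 0 < x ∧ t < f x} = Ioi 0 ∩ {x | t < f x} := rfl
    have hNset : {x : ℝ | x < 0 ∧ t < f x} = Iio 0 ∩ {x | t < f x} := rfl
    have hP : MeasurableSet {x : ℝ | 0 < x ∧ t < f x} := by
      rw [hPset]; exact measurableSet_Ioi.inter (hmeas_lt t)
    have hN : MeasurableSet {x : ℝ | x < 0 ∧ t < f x} := by
      rw [hNset]; exact measurableSet_Iio.inter (hmeas_lt t)
    have hdisj : Disjoint {x : ℝ | 0 < x ∧ t < f x} {x : ℝ | x < 0 ∧ t < f x} :=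
      Set.disjoint_left.mpr fun x hx hx' => absurd hx.1 (not_lt.mpr hx'.1.le)
    have key : m t = 2 * volume {x : ℝ | x < 0 ∧ t < f x} := by
      have hunion : m t = volume ({x : ℝ | 0 < x ∧ t < f x} ∪ {x : ℝ | x < 0 ∧ t < f x}) := by
        apply le_antisymm
        · calc m t ≤ volume (({x : ℝ | 0 < x ∧ t < f x} ∪ {x : ℝ | x < 0 ∧ t < f x}) ∪ {0}) := by
                apply measure_mono
                intro x hx
                rcases lt_trichotomy x 0 with h | h | h
                · exact Or.inl (Or.inr ⟨h, hx⟩)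
                · exact Or.inr (by simp [h])
                · exact Or.inl (Or.inl ⟨h, hx⟩)
            _ ≤ volume ({x : ℝ | 0 < x ∧ t < f x} ∪ {x : ℝ | x < 0 ∧ t < f x}) + volume {0} :=
                measure_union_le _ _
            _ = volume ({x : ℝ | 0 < x ∧ t < f x} ∪ {x : ℝ | x < 0 ∧ t < f x}) := by
                rw [Real.volume_singleton, add_zero]
        · exact measure_mono (union_subset (fun x hx => hx.2) fun x hx => hx.2)
      rw [hunion, measure_union hdisj hN, hsym t ht, two_mul]
    rw [ENNReal.eq_div_iff two_ne_zero ENNReal.ofNat_ne_top]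
    exact key.symm
  -- the distribution function of f on (-a, 0]
  have hA : ∀ t : ℝ, 0 < t →
      ν {x : ℝ | t < f x} ≤ min (ENNReal.ofReal a) (m t / 2) := by
    intro t ht
    rw [hν, Measure.restrict_apply (hmeas_lt t)]
    refine le_min ?_ ?_
    · calc volume ({x : ℝ | t < f x} ∩ Ioc (-a) 0) ≤ volume (Ioc (-a) 0) :=
            measure_mono inter_subset_right
        _ = ENNReal.ofReal a := by rw [Real.volume_Ioc]; congr 1; ring
    · rw [← hhalf t ht]
      calc volume ({x : ℝ | t < f x} ∩ Ioc (-a) 0)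
          ≤ volume ({x : ℝ | x < 0 ∧ t < f x} ∪ {0}) := by
            apply measure_mono
            rintro x ⟨hfx, _, hx2⟩
            rcases lt_or_eq_of_le hx2 with h | h
            · exact Or.inl ⟨h, hfx⟩
            · exact Or.inr (by simp [h])
        _ ≤ volume {x : ℝ | x < 0 ∧ t < f x} + volume {0} := measure_union_le _ _
        _ = volume {x : ℝ | x < 0 ∧ t < f x} := by rw [Real.volume_singleton, add_zero]
  -- the distribution function of the rearrangement on (-a, 0]
  have hFmeas : Measurable fun x => (rearr volume f x).toReal := hgmeas.ennreal_toReal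
  have hB : ∀ t : ℝ, 0 < t →
      min (ENNReal.ofReal a) (m t / 2) ≤ ν {x : ℝ | t < (rearr volume f x).toReal} := by
    intro t ht
    set r : ℝ := (m t).toReal / 2 with hr
    have hr0 : 0 ≤ r := by positivity
    have hmr : ENNReal.ofReal r = m t / 2 := by
      rw [hr, ENNReal.ofReal_div_of_pos two_pos, ENNReal.ofReal_toReal (hfin' t ht)]
      norm_num
    have hsub : Ioo (-(min a r)) 0 ⊆
        {x : ℝ | t < (rearr volume f x).toReal} ∩ Ioc (-a) 0 := by
      rintro x ⟨hx1, hx2⟩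
      have hxa : -a < x := lt_of_le_of_lt (neg_le_neg (min_le_left a r)) hx1
      have hxr : |x| < r := by
        rw [abs_of_neg hx2]
        exact lt_of_lt_of_le (neg_lt.mp hx1) (min_le_right a r)
      have hlt : ENNReal.ofReal t < rearr volume f x := by
        rw [hchar t ht x, ENNReal.ofReal_lt_iff_lt_toReal (by positivity) (hfin' t ht)]
        have : (m t).toReal = 2 * r := by rw [hr]; ring
        linarith
      have hne : rearr volume f x ≠ ⊤ := htop x (ne_of_lt hx2)
      exact ⟨(ENNReal.ofReal_lt_iff_lt_toReal ht.le hne).mp hlt, hxa, hx2.le⟩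
    have hmin : min (ENNReal.ofReal a) (m t / 2) = ENNReal.ofReal (min a r) := by
      rw [← hmr]
      have hmono : Monotone ENNReal.ofReal := fun _ _ h => ENNReal.ofReal_le_ofReal h
      exact (hmono.map_min).symm
    calc min (ENNReal.ofReal a) (m t / 2) = ENNReal.ofReal (min a r) := hmin
      _ = volume (Ioo (-(min a r)) 0) := by rw [Real.volume_Ioo]; congr 1; ring
      _ ≤ volume ({x : ℝ | t < (rearr volume f x).toReal} ∩ Ioc (-a) 0) :=
          measure_mono hsub
      _ = ν {x : ℝ | t < (rearr volume f x).toReal} := by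
          rw [hν, Measure.restrict_apply (measurableSet_lt measurable_const hFmeas)]
  -- replace the rearrangement by its toReal on (-a, 0]
  have hcong : ∫⁻ x in Ioc (-a) 0, rearr volume f x
      = ∫⁻ x in Ioc (-a) 0, ENNReal.ofReal ((rearr volume f x).toReal) := by
    apply lintegral_congr_ae
    have h0 : ∀ᵐ x ∂ν, x ≠ (0 : ℝ) := by
      apply ae_restrict_of_ae
      rw [ae_iff]
      have : {x : ℝ | ¬x ≠ 0} = {0} := by ext x; simp
      rw [this]
      exact Real.volume_singleton
    filter_upwards [h0] with x hx
    rw [ENNReal.ofReal_toReal (htop x hx)]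
  -- layer cake on both sides
  have hLHS : ∫⁻ x in Ioc (-a) 0, ENNReal.ofReal (f x)
      = ∫⁻ t in Ioi (0 : ℝ), ν {x : ℝ | t < f x} :=
    lintegral_eq_lintegral_meas_lt ν (Filter.Eventually.of_forall hf0) hf.aemeasurable
  have hRHS : ∫⁻ x in Ioc (-a) 0, ENNReal.ofReal ((rearr volume f x).toReal)
      = ∫⁻ t in Ioi (0 : ℝ), ν {x : ℝ | t < (rearr volume f x).toReal} :=
    lintegral_eq_lintegral_meas_lt ν (Filter.Eventually.of_forall fun x => ENNReal.toReal_nonneg)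
      hFmeas.aemeasurable
  rw [hcong, hLHS, hRHS]
  apply lintegral_mono_ae
  rw [ae_restrict_iff' measurableSet_Ioi]
  refine Filter.Eventually.of_forall fun t ht => ?_
  exact (hA t ht).trans (hB t ht)
end

section
/- Let 1 < p < ∞ and let C_p be the unique positive root of (p−1)x^p − p x^{p−1} − 1 = 0. Define a(u) = |2u|^{−1/p} for u ≠ 0. Then for every t ≠ 0, the uncentered Hardy–Littlewood maximal function of a with respect to Lebesgue measure satisfies M a(t) = C_p |2t|^{−1/p}. -/
open MeasureTheory Set ENNReal

/-!
By reflection it suffices to take `t > 0`. Put `φ(u) = |2u|^{-1/p}` and `s = C^{-p} t ≤ t`, so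
that `φ(s) = C (2t)^{-1/p}`; the root equation for `C` says exactly that the average of `φ` over
`(-s, t)` is `φ(s)`. As `φ ≥ φ(s)` precisely on `[-s, s]`, moving an endpoint of `(-s, t)` while
keeping `t` inside only adds mass where `φ ≤ φ(s)` or removes mass where `φ ≥ φ(s)`, so no interval
containing `t` has a larger average, while `(-s, t)` itself is the limit of the admissible intervals
`(-s, b)`, `b ↓ t`.
-/

section MaximalFunction

variable {μ : Measure ℝ} {g : ℝ → ℝ≥0∞} {x a b : ℝ}

lemma le_maximalE (hx : x ∈ Ioo a b) (hμ : 0 < μ (Ioo a b)) :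
    (μ (Ioo a b))⁻¹ * ∫⁻ y in Ioo a b, g y ∂μ ≤ maximalE μ g x :=
  le_iSup_of_le a <| le_iSup_of_le b <| le_iSup_of_le hx <| le_iSup_of_le hμ le_rfl

lemma maximalE_comp_neg_le (g : ℝ → ℝ≥0∞) (x : ℝ) :
    maximalE volume (fun y => g (-y)) x ≤ maximalE volume g (-x) := by
  refine iSup_le fun a => iSup_le fun b => iSup_le fun hx => iSup_le fun hvol => ?_
  have hx' : -x ∈ Ioo (-b) (-a) := ⟨neg_lt_neg hx.2, neg_lt_neg hx.1⟩
  have hvol_neg : volume (Ioo (-b) (-a)) = volume (Ioo a b) := by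
    rw [Real.volume_Ioo, Real.volume_Ioo, neg_sub_neg]
  have hlint : ∫⁻ y in Ioo a b, g (-y) = ∫⁻ y in Ioo (-b) (-a), g y := by
    rw [← image_neg_Ioo, ← (Measure.measurePreserving_neg volume).setLIntegral_comp_emb
      (MeasurableEquiv.neg ℝ).measurableEmbedding]
  rw [hlint, ← hvol_neg]
  exact le_maximalE hx' (hvol_neg ▸ hvol)

lemma maximal_neg_of_even {f : ℝ → ℝ} (hf : ∀ y, f (-y) = f y) (x : ℝ) :
    maximal volume f (-x) = maximal volume f x := by
  have h := maximalE_comp_neg_le (fun y => ENNReal.ofReal |f y|)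
  simp only [hf] at h
  exact le_antisymm (by simpa [maximal] using h (-x)) (h x)

end MaximalFunction

section Averages

variable {f : ℝ → ℝ} {x a b : ℝ}

lemma inv_volume_Ioo_mul_lintegral_eq_ofReal (hf : IntervalIntegrable f volume a b) (hab : a < b) :
    (volume (Ioo a b))⁻¹ * ∫⁻ y in Ioo a b, ENNReal.ofReal |f y| =
      ENNReal.ofReal ((b - a)⁻¹ * ∫ u in a..b, |f u|) := by
  have hint : IntegrableOn (fun u => |f u|) (Ioo a b) :=
    (hf.abs.1).mono_set Ioo_subset_Ioc_self
  rw [Real.volume_Ioo, intervalIntegral.integral_of_le hab.le, integral_Ioc_eq_integral_Ioo,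
    ENNReal.ofReal_mul (inv_nonneg.2 (sub_pos.2 hab).le), ENNReal.ofReal_inv_of_pos (sub_pos.2 hab),
    ofReal_integral_eq_lintegral_ofReal hint (Filter.Eventually.of_forall fun _ => abs_nonneg _)]

lemma maximal_le_ofReal (hf : ∀ a b, IntervalIntegrable f volume a b) {K : ℝ}
    (hK : ∀ a b, a < x → x < b → ∫ u in a..b, |f u| ≤ K * (b - a)) :
    maximal volume f x ≤ ENNReal.ofReal K := by
  refine iSup_le fun a => iSup_le fun b => iSup_le fun hx => iSup_le fun _ => ?_
  have hab : 0 < b - a := sub_pos.2 (hx.1.trans hx.2)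
  rw [inv_volume_Ioo_mul_lintegral_eq_ofReal (hf a b) (sub_pos.1 hab)]
  exact ENNReal.ofReal_le_ofReal ((inv_mul_le_iff₀ hab).2 (by linarith [hK a b hx.1 hx.2]))

lemma ofReal_average_le_maximal (hf : ∀ a b, IntervalIntegrable f volume a b)
    (hax : a < x) (hxb : x ≤ b) :
    ENNReal.ofReal ((b - a)⁻¹ * ∫ u in a..b, |f u|) ≤ maximal volume f x := by
  have hbeyond : ∀ b' ∈ Ioi b,
      ENNReal.ofReal ((b' - a)⁻¹ * ∫ u in a..b', |f u|) ≤ maximal volume f x := by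
    intro b' hb'
    have hab' : a < b' := hax.trans_le (hxb.trans hb'.out.le)
    rw [← inv_volume_Ioo_mul_lintegral_eq_ofReal (hf a b') hab']
    exact le_maximalE ⟨hax, hxb.trans_lt hb'⟩ (by simpa using hab')
  have hcont : ContinuousAt (fun b' => (b' - a)⁻¹ * ∫ u in a..b', |f u|) b :=
    ((continuousAt_id.sub continuousAt_const).inv₀ (sub_pos.2 (hax.trans_le hxb)).ne').mul
      (intervalIntegral.continuous_primitive (fun a b => (hf a b).abs) a).continuousAt
  exact le_of_tendsto ((ENNReal.continuous_ofReal.tendsto _).comp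
    (hcont.tendsto.mono_left nhdsWithin_le_nhds)) (eventually_nhdsWithin_of_forall hbeyond)

end Averages

open intervalIntegral in
lemma integral_le_mul_sub_of_superlevel {φ : ℝ → ℝ} (hφ : ∀ a b, IntervalIntegrable φ volume a b)
    {K s t a b : ℝ} (hout : ∀ u, s ≤ |u| → φ u ≤ K) (hin : ∀ᵐ u, u ∈ Icc (-s) s → K ≤ φ u)
    (hbal : ∫ u in (-s)..t, φ u = K * (t + s)) (hst : s ≤ t) (hat : a ≤ t) (htb : t ≤ b) :
    ∫ u in a..b, φ u ≤ K * (b - a) := by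
  have hle_out : ∀ x y, x ≤ y → (∀ u ∈ Icc x y, s ≤ |u|) → ∫ u in x..y, φ u ≤ K * (y - x) := by
    intro x y hxy hxy_out
    calc ∫ u in x..y, φ u ≤ ∫ _ in x..y, K :=
          integral_mono_on hxy (hφ x y) intervalIntegrable_const fun u hu => hout u (hxy_out u hu)
      _ = K * (y - x) := by rw [intervalIntegral.integral_const, smul_eq_mul, mul_comm]
  have hright : ∫ u in t..b, φ u ≤ K * (b - t) :=
    hle_out t b htb fun u hu => hst.trans (hu.1.trans (le_abs_self u))
  have hleft : ∫ u in a..t, φ u ≤ K * (t - a) := by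
    rcases le_or_gt a (-s) with has | has
    · have := hle_out a (-s) has fun u hu => le_abs.2 (Or.inr (by linarith [hu.2]))
      linarith [integral_add_adjacent_intervals (hφ a (-s)) (hφ (-s) t)]
    rcases le_or_gt a s with has' | has'
    · have hin' : (fun _ => K) ≤ᵐ[volume.restrict (Icc (-s) a)] φ := by
        filter_upwards [ae_restrict_mem measurableSet_Icc, ae_restrict_of_ae hin] with u hu hKu
        exact hKu ⟨hu.1, hu.2.trans has'⟩
      have := integral_mono_ae_restrict has.le intervalIntegrable_const (hφ (-s) a) hin'
      rw [intervalIntegral.integral_const, smul_eq_mul] at this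
      linarith [integral_add_adjacent_intervals (hφ (-s) a) (hφ a t)]
    · exact hle_out a t hat fun u hu => has'.le.trans (hu.1.trans (le_abs_self u))
  linarith [integral_add_adjacent_intervals (hφ a t) (hφ t b)]

lemma maximal_eq_of_superlevel {φ : ℝ → ℝ} (hφ : ∀ a b, IntervalIntegrable φ volume a b)
    (hφ0 : ∀ u, 0 ≤ φ u) {K s t : ℝ} (hout : ∀ u, s ≤ |u| → φ u ≤ K)
    (hin : ∀ᵐ u, u ∈ Icc (-s) s → K ≤ φ u) (hbal : ∫ u in (-s)..t, φ u = K * (t + s))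
    (hst : s ≤ t) (hts : -s < t) :
    maximal volume φ t = ENNReal.ofReal K := by
  have habs : (fun u => |φ u|) = φ := funext fun u => abs_of_nonneg (hφ0 u)
  refine le_antisymm (maximal_le_ofReal hφ fun a b hat htb => ?_) ?_
  · rw [habs]
    exact integral_le_mul_sub_of_superlevel hφ hout hin hbal hst hat.le htb.le
  · have h := ofReal_average_le_maximal hφ hts le_rfl
    rwa [habs, hbal, sub_neg_eq_add, mul_comm K, inv_mul_cancel_left₀ (by linarith)] at h

section AbsRpow

variable {r : ℝ}

lemma intervalIntegrable_abs_rpow (hr : -1 < r) (a b : ℝ) :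
    IntervalIntegrable (fun u => |u| ^ r) volume a b := by
  have hnonneg : ∀ c, 0 ≤ c → IntervalIntegrable (fun u => |u| ^ r) volume 0 c := fun c hc =>
    (intervalIntegral.intervalIntegrable_rpow' hr).congr fun u hu => by
      rw [uIoc_of_le hc] at hu
      rw [abs_of_pos hu.1]
  have hall : ∀ c, IntervalIntegrable (fun u => |u| ^ r) volume 0 c := by
    intro c
    rcases le_total 0 c with hc | hc
    · exact hnonneg c hc
    · simpa using (IntervalIntegrable.iff_comp_neg (f := fun u => |u| ^ r)).2
        (by simpa using hnonneg (-c) (neg_nonneg.2 hc))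
  exact (hall a).symm.trans (hall b)

lemma integral_abs_rpow (hr : -1 < r) {s t : ℝ} (hs : 0 ≤ s) (ht : 0 ≤ t) :
    ∫ u in (-s)..t, |u| ^ r = (s ^ (r + 1) + t ^ (r + 1)) / (r + 1) := by
  have hnonneg : ∀ c, 0 ≤ c → ∫ u in (0 : ℝ)..c, |u| ^ r = c ^ (r + 1) / (r + 1) := by
    intro c hc
    have hid : EqOn (fun u => |u| ^ r) (fun u => u ^ r) (uIcc 0 c) := fun u hu => by
      rw [uIcc_of_le hc] at hu
      simp only [abs_of_nonneg hu.1]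
    rw [intervalIntegral.integral_congr hid, integral_rpow (Or.inl hr),
      Real.zero_rpow (by linarith), sub_zero]
  have hreflect : ∫ u in (-s)..0, |u| ^ r = ∫ u in (0 : ℝ)..s, |u| ^ r := by
    simpa using (intervalIntegral.integral_comp_neg (a := 0) (b := s) (fun u => |u| ^ r)).symm
  rw [← intervalIntegral.integral_add_adjacent_intervals (intervalIntegrable_abs_rpow hr _ _)
    (intervalIntegrable_abs_rpow hr _ _), hreflect, hnonneg s hs, hnonneg t ht, add_div]

end AbsRpow

section Root

variable {p C : ℝ}

lemma neg_one_lt_neg_one_div (hp : 1 < p) : -1 < -(1 / p) :=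
  neg_lt_neg ((div_lt_one (by linarith)).2 hp)

lemma one_lt_of_root (hp : 1 < p) (hC : 0 < C)
    (hroot : (p - 1) * C ^ p - p * C ^ (p - 1) - 1 = 0) : 1 < C := by
  by_contra! hC1
  have hpow : C ^ p ≤ C ^ (p - 1) := Real.rpow_le_rpow_of_exponent_ge hC hC1 (by linarith)
  nlinarith [Real.rpow_pos_of_pos hC (p - 1)]

lemma rpow_neg_mul_rpow_neg_one_div (hC : 0 ≤ C) (hp : p ≠ 0) {t : ℝ} (ht : 0 ≤ t) :
    (C ^ (-p) * t) ^ (-(1 / p)) = C * t ^ (-(1 / p)) := by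
  rw [Real.mul_rpow (Real.rpow_nonneg hC _) ht, ← Real.rpow_mul hC,
    show -p * -(1 / p) = 1 by field_simp, Real.rpow_one]

-- The root equation in the form `(σ^{r+1} + 1) / (r + 1) = σ^r (1 + σ)` with `r = -1/p` and
-- `σ = C^{-p}`, i.e. `∫_{-σ}^{1} |u|^r du = σ^r (1 + σ)`.
lemma root_identity (hp : 1 < p) (hC : 0 < C)
    (hroot : (p - 1) * C ^ p - p * C ^ (p - 1) - 1 = 0) :
    (C * C ^ (-p) + 1) / (-(1 / p) + 1) = C * (1 + C ^ (-p)) := by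
  have hpow : C ^ p = C ^ (p - 1) * C := by rw [← Real.rpow_add_one hC.ne', sub_add_cancel]
  have hinv : C ^ p * C ^ (-p) = 1 := by rw [← Real.rpow_add hC, add_neg_cancel, Real.rpow_zero]
  rw [hpow] at hroot hinv
  rw [show -(1 / p) + 1 = (p - 1) / p by field_simp; ring, div_div_eq_mul_div,
    div_eq_iff (by linarith)]
  linear_combination (-(C * C ^ (-p))) * hroot + ((p - 1) * C - p) * hinv

lemma integral_abs_rpow_of_root (hp : 1 < p) (hC : 0 < C)
    (hroot : (p - 1) * C ^ p - p * C ^ (p - 1) - 1 = 0) {t : ℝ} (ht : 0 < t) :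
    ∫ u in (-(C ^ (-p) * t))..t, |u| ^ (-(1 / p)) =
      C * t ^ (-(1 / p)) * (t + C ^ (-p) * t) := by
  have hs : 0 < C ^ (-p) * t := by positivity
  rw [integral_abs_rpow (neg_one_lt_neg_one_div hp) hs.le ht.le, Real.rpow_add_one hs.ne',
    Real.rpow_add_one ht.ne', rpow_neg_mul_rpow_neg_one_div hC.le (by positivity) ht.le]
  linear_combination (t ^ (-(1 / p)) * t) * root_identity hp hC hroot

end Root

lemma maximal_abs_two_mul_rpow_of_pos {p C t : ℝ} (hp : 1 < p) (hC : 0 < C)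
    (hroot : (p - 1) * C ^ p - p * C ^ (p - 1) - 1 = 0) (ht : 0 < t) :
    maximal volume (fun u => |2 * u| ^ (-(1 / p))) t =
      ENNReal.ofReal (C * |2 * t| ^ (-(1 / p))) := by
  set r := -(1 / p)
  have hr : -1 < r := neg_one_lt_neg_one_div hp
  have hr0 : r ≤ 0 := neg_nonpos.2 (by positivity)
  have hφ_eq : (fun u : ℝ => |2 * u| ^ r) = fun u => 2 ^ r * |u| ^ r := funext fun u => by
    rw [abs_mul, abs_two, Real.mul_rpow zero_le_two (abs_nonneg u)]
  have hanti : ∀ u v : ℝ, u ≠ 0 → |u| ≤ |v| → 2 ^ r * |v| ^ r ≤ 2 ^ r * |u| ^ r := by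
    intro u v hu huv
    gcongr 2 ^ r * ?_
    exact Real.rpow_le_rpow_of_nonpos (abs_pos.2 hu) huv hr0
  set s := C ^ (-p) * t
  have hs : 0 < s := by positivity
  have habs_s : |s| = s := abs_of_pos hs
  have hst : s ≤ t := mul_le_of_le_one_left ht.le
    (Real.rpow_le_one_of_one_le_of_nonpos (one_lt_of_root hp hC hroot).le (by linarith))
  have hK : C * |2 * t| ^ r = 2 ^ r * |s| ^ r := by
    rw [habs_s, rpow_neg_mul_rpow_neg_one_div hC.le (by positivity) ht.le,
      abs_of_pos (by positivity), Real.mul_rpow zero_le_two ht.le]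
    ring
  rw [hφ_eq, hK]
  refine maximal_eq_of_superlevel (s := s)
    (fun a b => (intervalIntegrable_abs_rpow hr a b).const_mul _)
    (fun u => by positivity) (fun u hu => hanti s u hs.ne' (by rwa [habs_s])) ?_ ?_ hst
    (by linarith)
  · filter_upwards [Measure.ae_ne volume 0] with u hu hmem
    exact hanti u s hu (by rw [habs_s]; exact abs_le.2 hmem)
  · rw [intervalIntegral.integral_const_mul, integral_abs_rpow_of_root hp hC hroot ht, habs_s,
      rpow_neg_mul_rpow_neg_one_div hC.le (by positivity) ht.le]
    ring

/-- for `a(u) = |2u|^{-1/p}` one has `M a (t) = C_p |2t|^{-1/p}`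
for every `t ≠ 0`, where `C_p` is the unique positive root of
`(p-1)x^p - p x^(p-1) - 1 = 0`. -/
theorem stmt_13 (p : ℝ) (hp : 1 < p) (C : ℝ) (hC : 0 < C)
    (hroot : (p - 1) * C ^ p - p * C ^ (p - 1) - 1 = 0)
    (t : ℝ) (ht : t ≠ 0) :
    maximal volume (fun u => |2 * u| ^ (-(1 / p))) t =
      ENNReal.ofReal (C * |2 * t| ^ (-(1 / p))) := by
  rcases ht.lt_or_gt with ht | ht
  · have h := maximal_abs_two_mul_rpow_of_pos hp hC hroot (neg_pos.2 ht)
    rwa [maximal_neg_of_even (fun u => by simp only [mul_neg, abs_neg]), mul_neg, abs_neg] at h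
  · exact maximal_abs_two_mul_rpow_of_pos hp hC hroot ht
end
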